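/- arXiv:2603.25110 — 9 statements merged into one kernel-verified Lean document; each statement's English description precedes it below -/
import Mathlib

section
/- If G is a nilpotent group such that the quotient G/Z(G) by its center contains a nontrivial divisible subgroup, then G itself contains a nontrivial divisible subgroup. -/
/-- A subgroup `D` of a group is *divisible* if every element of `D` has an
`n`-th root in `D` for every positive integer `n`. -/
def Subgroup.IsDivisible {G : Type*} [Group G] (D : Subgroup G) : Prop :=
  ∀ d ∈ D, ∀ n : ℕ, 0 < n → ∃ x ∈ D, x ^ n = d

/-!
If `E ≤ Z(G ⧸ Z(G))` is nontrivial and divisible, then for each `g` the commutators `⁅h, g⁆`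
with `h` in the preimage of `E` are central, so `h ↦ ⁅h, g⁆` is a homomorphism vanishing on
`Z(G)`. It factors through `E`, hence its image is a divisible subgroup of `Z(G)`, nontrivial for
a suitable `g`. Such an `E` exists because, by induction on the nilpotency class, a nilpotent
group with a nontrivial divisible subgroup has one inside its centre: a non-central divisible
subgroup has a nontrivial divisible image modulo the centre.
-/

open Subgroup
open scoped commutatorElement

section

variable {G G' : Type*} [Group G] [Group G']

theorem Subgroup.IsDivisible.map {D : Subgroup G} (hD : D.IsDivisible) (f : G →* G') :
    (D.map f).IsDivisible := by
  rintro _ ⟨d, hd, rfl⟩ n hn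
  obtain ⟨x, hx, rfl⟩ := hD d hd n hn
  exact ⟨f x, mem_map_of_mem f hx, (map_pow f x n).symm⟩

theorem commutatorElement_mul_of_mem_center {z : G} (hz : z ∈ center G) (h g : G) :
    ⁅h * z, g⁆ = ⁅h, g⁆ := by
  have hzg : z * g = g * z := mem_center_iff.mp hz g |>.symm
  calc ⁅h * z, g⁆ = h * (z * g) * z⁻¹ * h⁻¹ * g⁻¹ := by simp only [commutatorElement_def]; group
    _ = ⁅h, g⁆ := by rw [hzg, commutatorElement_def]; group

theorem commutatorElement_mem_center_of_mk_mem_center {h : G}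
    (hh : QuotientGroup.mk' (center G) h ∈ center (G ⧸ center G)) (g : G) :
    ⁅h, g⁆ ∈ center G := by
  rw [← QuotientGroup.ker_mk' (center G), MonoidHom.mem_ker, map_commutatorElement,
    commutatorElement_eq_one_iff_commute]
  exact (mem_center_iff.mp hh _).symm

section CommutatorLeftHom

variable {E : Subgroup (G ⧸ center G)} (hEc : E ≤ center (G ⧸ center G)) (g : G)

def commutatorLeftHom : E.comap (QuotientGroup.mk' (center G)) →* G where
  toFun h := ⁅(h : G), g⁆
  map_one' := by simp
  map_mul' h₁ h₂ := by
    have hc := mem_center_iff.mp (commutatorElement_mem_center_of_mk_mem_center (hEc h₂.2) g)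
    calc ⁅(h₁ : G) * h₂, g⁆ = (h₁ : G) * ⁅(h₂ : G), g⁆ * (h₁ : G)⁻¹ * ⁅(h₁ : G), g⁆ := by
          simp only [commutatorElement_def]; group
      _ = ⁅(h₂ : G), g⁆ * ⁅(h₁ : G), g⁆ := by rw [hc, mul_inv_cancel_right]
      _ = ⁅(h₁ : G), g⁆ * ⁅(h₂ : G), g⁆ := (hc _).symm

theorem commutatorLeftHom_apply (h : E.comap (QuotientGroup.mk' (center G))) :
    commutatorLeftHom hEc g h = ⁅(h : G), g⁆ :=
  rfl

theorem range_commutatorLeftHom_le_center : (commutatorLeftHom hEc g).range ≤ center G := by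
  rintro _ ⟨h, rfl⟩
  exact commutatorElement_mem_center_of_mk_mem_center (hEc h.2) g

theorem Subgroup.IsDivisible.range_commutatorLeftHom (hEdiv : E.IsDivisible) :
    (commutatorLeftHom hEc g).range.IsDivisible := by
  rintro _ ⟨h, rfl⟩ n hn
  obtain ⟨x, hx, hxn⟩ := hEdiv _ h.2 n hn
  obtain ⟨a, rfl⟩ := QuotientGroup.mk'_surjective (center G) x
  obtain ⟨z, hz, hzh⟩ := (QuotientGroup.mk'_eq_mk' _).mp ((map_pow _ a n).trans hxn)
  refine ⟨commutatorLeftHom hEc g ⟨a, hx⟩, ⟨⟨a, hx⟩, rfl⟩, ?_⟩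
  rw [← map_pow, commutatorLeftHom_apply, commutatorLeftHom_apply, SubgroupClass.coe_pow, ← hzh,
    commutatorElement_mul_of_mem_center hz]

theorem exists_range_commutatorLeftHom_ne_bot (hE : E ≠ ⊥) :
    ∃ g : G, (commutatorLeftHom hEc g).range ≠ ⊥ := by
  obtain ⟨⟨e, he⟩, he1⟩ := Subgroup.ne_bot_iff_exists_ne_one.mp hE
  obtain ⟨h, rfl⟩ := QuotientGroup.mk'_surjective (center G) e
  obtain ⟨g, hg⟩ : ∃ g : G, ⁅h, g⁆ ≠ 1 := by
    have hh : h ∉ center G := fun hc =>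
      he1 (Subtype.ext ((QuotientGroup.eq_one_iff h).mpr hc))
    simpa [mem_center_iff, commutatorElement_eq_one_iff_mul_comm, eq_comm] using hh
  refine ⟨g, MonoidHom.range_eq_bot_iff.not.mpr fun hφ => hg ?_⟩
  exact DFunLike.congr_fun hφ ⟨h, he⟩

end CommutatorLeftHom

theorem exists_isDivisible_le_center_of_le_center_quotient {E : Subgroup (G ⧸ center G)}
    (hE : E ≠ ⊥) (hEdiv : E.IsDivisible) (hEc : E ≤ center (G ⧸ center G)) :
    ∃ K : Subgroup G, K ≠ ⊥ ∧ K.IsDivisible ∧ K ≤ center G :=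
  have ⟨g, hg⟩ := exists_range_commutatorLeftHom_ne_bot hEc hE
  ⟨_, hg, hEdiv.range_commutatorLeftHom hEc g, range_commutatorLeftHom_le_center hEc g⟩

end

theorem Group.exists_isDivisible_le_center {N : Type*} [Group N] [Group.IsNilpotent N]
    {D : Subgroup N} (hD : D ≠ ⊥) (hDdiv : D.IsDivisible) :
    ∃ E : Subgroup N, E ≠ ⊥ ∧ E.IsDivisible ∧ E ≤ center N := by
  refine Group.nilpotent_center_quotient_ind
    (P := fun N _ _ => ∀ D : Subgroup N, D ≠ ⊥ → D.IsDivisible →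
      ∃ E : Subgroup N, E ≠ ⊥ ∧ E.IsDivisible ∧ E ≤ center N) N ?_ ?_ D hD hDdiv
  · intro N _ _ D hD
    exact absurd (Subsingleton.elim D ⊥) hD
  · intro N _ _ ih D hD hDdiv
    by_cases hDc : D ≤ center N
    · exact ⟨D, hD, hDdiv, hDc⟩
    have hD' : D.map (QuotientGroup.mk' (center N)) ≠ ⊥ := by
      rwa [Ne, Subgroup.map_eq_bot_iff, QuotientGroup.ker_mk']
    obtain ⟨E, hE, hEdiv, hEc⟩ := ih _ hD' (hDdiv.map _)
    exact exists_isDivisible_le_center_of_le_center_quotient hE hEdiv hEc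

theorem stmt0 {G : Type*} [Group G] [Group.IsNilpotent G]
    (h : ∃ D : Subgroup (G ⧸ Subgroup.center G), D ≠ ⊥ ∧ D.IsDivisible) :
    ∃ D : Subgroup G, D ≠ ⊥ ∧ D.IsDivisible := by
  obtain ⟨D, hD, hDdiv⟩ := h
  obtain ⟨E, hE, hEdiv, hEc⟩ := Group.exists_isDivisible_le_center hD hDdiv
  obtain ⟨K, hK, hKdiv, -⟩ := exists_isDivisible_le_center_of_le_center_quotient hE hEdiv hEc
  exact ⟨K, hK, hKdiv⟩
end

section
/- Let G be a nilpotent group of nilpotency class s and n a positive integer. Then the subgroup generated by the set of (n^s)-th powers { x^(n^s) : x ∈ G } is contained in the set of n-th powers { x^n : x ∈ G }. -/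
/-!
We prove by induction on `s` the stronger statement that every element of `⟨G ^ n ^ s⟩` is an
`n`-th power modulo `γ s`, where `γ i = (⊤ : Subgroup G).lowerCentralSeries i` (so `γ 0 = G`).
Put `H = ⟨G ^ n⟩`. Then `⟨G ^ n ^ (s + 1)⟩ ⊆ ⟨H ^ n ^ s⟩`, so by induction in the group `H` an
element `g` of it is `y ^ n * z` with `y ∈ H` and `z` in the `s`-th term of the lower central
series of `H`. Since iterated commutators are multilinear modulo the next term of the series, that
term lies in `⟨(γ s) ^ n ^ (s + 1)⟩ ⊔ γ (s + 1)`; as `γ s` is central modulo `γ (s + 1)`, this gives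
`z ≡ w ^ n` with `w` central there, whence `g ≡ (y * w) ^ n`.
-/

open Subgroup QuotientGroup
open scoped commutatorElement

section

variable {G : Type*} [Group G]

theorem Subgroup.commutator_closure_closure_le {S T : Set G} {N : Subgroup G} [N.Normal]
    (h : ∀ a ∈ S, ∀ b ∈ T, ⁅a, b⁆ ∈ N) : ⁅closure S, closure T⁆ ≤ N := by
  rw [← ker_mk' N, ← map_eq_bot_iff, map_commutator, MonoidHom.map_closure,
    MonoidHom.map_closure, commutator_eq_bot_iff_le_centralizer, centralizer_closure, closure_le]
  rintro _ ⟨a, ha, rfl⟩ _ ⟨b, hb, rfl⟩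
  rw [eq_comm, ← commutatorElement_eq_one_iff_mul_comm, ← map_commutatorElement,
    ← MonoidHom.mem_ker, ker_mk']
  exact h a ha b hb

theorem Subgroup.closure_normal_of_conj_mem {S : Set G}
    (hS : ∀ g, ∀ x ∈ S, g * x * g⁻¹ ∈ S) : (closure S).Normal := by
  have : normalClosure S ≤ closure S := closure_mono fun x hx => by
    obtain ⟨a, ha, hax⟩ := Group.mem_conjugatesOfSet_iff.mp hx
    obtain ⟨c, rfl⟩ := isConj_iff.mp hax
    exact hS c a ha
  rw [← le_antisymm this closure_le_normalClosure]
  infer_instance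

theorem Subgroup.closure_image_pow_normal (K : Subgroup G) [K.Normal] (m : ℕ) :
    (closure ((· ^ m) '' (K : Set G))).Normal :=
  closure_normal_of_conj_mem <| by
    rintro g _ ⟨c, hc, rfl⟩
    exact ⟨g * c * g⁻¹, Normal.conj_mem ‹_› c hc g, conj_pow⟩

theorem commutatorElement_pow_right_of_mem_center {a b : G} (h : ⁅a, b⁆ ∈ center G) (k : ℕ) :
    ⁅a, b ^ k⁆ = ⁅a, b⁆ ^ k := by
  induction k with
  | zero => simp
  | succ k ih =>
    rw [pow_succ, commutatorElement_mul_right_eq_mul_conj, ih, mul_assoc _ (b ^ k),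
      mem_center_iff.mp h, ← mul_assoc, mul_inv_cancel_right, pow_succ]

theorem commutatorElement_pow_pow_of_mem_center {a b : G} (h : ⁅a, b⁆ ∈ center G) (j k : ℕ) :
    ⁅a ^ j, b ^ k⁆ = ⁅a, b⁆ ^ (k * j) := by
  have hk : ⁅b ^ k, a⁆ ∈ center G := by
    rw [← commutatorElement_inv, commutatorElement_pow_right_of_mem_center h]
    exact inv_mem (pow_mem h k)
  rw [← commutatorElement_inv, commutatorElement_pow_right_of_mem_center hk,
    ← commutatorElement_inv, commutatorElement_pow_right_of_mem_center h, pow_mul, inv_pow, inv_inv]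

theorem QuotientGroup.mk_mem_center_of_commutator_le {K N : Subgroup G} [N.Normal]
    (hK : ⁅K, ⊤⁆ ≤ N) {k : G} (hk : k ∈ K) : (k : G ⧸ N) ∈ center (G ⧸ N) := by
  refine mem_center_iff.mpr (QuotientGroup.induction_on · fun g => ?_)
  rw [eq_comm, ← commutatorElement_eq_one_iff_mul_comm, ← mk'_apply, ← mk'_apply,
    ← map_commutatorElement, mk'_apply, eq_one_iff]
  exact hK (commutator_mem_commutator hk (mem_top g))

theorem Subgroup.commutatorElement_pow_pow_mem_lowerCentralSeries_sup (n i : ℕ) {c : G}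
    (hc : c ∈ (⊤ : Subgroup G).lowerCentralSeries i) (x : G) :
    ⁅c ^ n ^ (i + 1), x ^ n⁆ ∈ (⊤ : Subgroup G).lowerCentralSeries (i + 2) ⊔
      closure ((· ^ n ^ (i + 2)) '' ((⊤ : Subgroup G).lowerCentralSeries (i + 1) : Set G)) := by
  have hcx : ⁅c, x⁆ ∈ (⊤ : Subgroup G).lowerCentralSeries (i + 1) :=
    commutator_mem_commutator hc (mem_top x)
  set π := mk' ((⊤ : Subgroup G).lowerCentralSeries (i + 2))
  have hcentral : ⁅π c, π x⁆ ∈ center _ := by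
    rw [← map_commutatorElement]
    exact mk_mem_center_of_commutator_le le_rfl hcx
  have key : π ⁅c ^ n ^ (i + 1), x ^ n⁆ = π (⁅c, x⁆ ^ n ^ (i + 2)) := by
    rw [map_commutatorElement, map_pow, map_pow, commutatorElement_pow_pow_of_mem_center hcentral,
      map_pow, map_commutatorElement, ← pow_succ']
  rw [← comap_map_mk', mem_comap, key]
  exact mem_map_of_mem _ (subset_closure ⟨_, hcx, rfl⟩)

theorem Subgroup.lowerCentralSeries_closure_range_pow_le (n i : ℕ) :
    (closure (Set.range fun y : G => y ^ n)).lowerCentralSeries i ≤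
      (⊤ : Subgroup G).lowerCentralSeries (i + 1) ⊔
        closure ((· ^ n ^ (i + 1)) '' ((⊤ : Subgroup G).lowerCentralSeries i : Set G)) := by
  induction i with
  | zero =>
    refine le_sup_of_le_right (closure_mono ?_)
    rw [lowerCentralSeries_zero, coe_top, Set.image_univ, zero_add, pow_one]
  | succ i ih =>
    have := closure_image_pow_normal ((⊤ : Subgroup G).lowerCentralSeries (i + 1)) (n ^ (i + 2))
    rw [← closure_eq ((⊤ : Subgroup G).lowerCentralSeries (i + 1)), ← closure_union] at ih
    rw [lowerCentralSeries_succ (closure _)]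
    refine (commutator_mono ih le_rfl).trans (commutator_closure_closure_le ?_)
    rintro a (ha | ⟨c, hc, rfl⟩) _ ⟨x, rfl⟩
    · exact mem_sup_left (commutator_mem_commutator ha (mem_top _))
    · exact commutatorElement_pow_pow_mem_lowerCentralSeries_sup n i hc x

theorem exists_mem_pow_eq_of_mem_closure_image_pow {K : Subgroup G} (hK : K ≤ center G) {n : ℕ}
    {g : G} (hg : g ∈ Subgroup.closure ((· ^ n) '' (K : Set G))) : ∃ w ∈ K, w ^ n = g := by
  induction hg using closure_induction with
  | mem _ hg => exact hg
  | one => exact ⟨1, K.one_mem, one_pow n⟩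
  | mul _ _ _ _ ha hb =>
    obtain ⟨a, ha, rfl⟩ := ha
    obtain ⟨b, hb, rfl⟩ := hb
    exact ⟨a * b, K.mul_mem ha hb, Commute.mul_pow (mem_center_iff.mp (hK hb) a) n⟩
  | inv _ _ ha =>
    obtain ⟨a, ha, rfl⟩ := ha
    exact ⟨a⁻¹, K.inv_mem ha, inv_pow a n⟩

theorem exists_pow_mul_eq_pow_mul_of_mem_sup {K N : Subgroup G} [N.Normal] (hK : ⁅K, ⊤⁆ ≤ N)
    (n : ℕ) (y : G) {z : G} (hz : z ∈ N ⊔ Subgroup.closure ((· ^ n) '' (K : Set G))) :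
    ∃ w, ∃ t ∈ N, w ^ n * t = y ^ n * z := by
  set π := mk' N
  have hcenter : K.map π ≤ center (G ⧸ N) := by
    rintro _ ⟨k, hk, rfl⟩
    exact mk_mem_center_of_commutator_le hK hk
  have hz' : π z ∈ Subgroup.closure ((· ^ n) '' (K.map π : Set (G ⧸ N))) := by
    rw [← comap_map_mk', mem_comap, MonoidHom.map_closure] at hz
    simpa [π, Set.image_image] using hz
  obtain ⟨_, ⟨w, hw, rfl⟩, hwz⟩ := exists_mem_pow_eq_of_mem_closure_image_pow hcenter hz'
  have key : π ((y * w) ^ n) = π (y ^ n * z) := by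
    have hwy : Commute (π y) (π w) := mem_center_iff.mp (hcenter ⟨w, hw, rfl⟩) (π y)
    rw [map_pow, map_mul, hwy.mul_pow, map_mul, map_pow, hwz]
  exact ⟨y * w, ((y * w) ^ n)⁻¹ * (y ^ n * z), QuotientGroup.eq.mp key, mul_inv_cancel_left _ _⟩

theorem Subgroup.closure_image_pow_mul_le (K : Subgroup G) (k m : ℕ) :
    closure ((· ^ (k * m)) '' (K : Set G)) ≤ closure ((· ^ m) '' (K : Set G)) :=
  closure_mono <| by
    rintro _ ⟨c, hc, rfl⟩
    exact ⟨c ^ k, K.pow_mem hc k, (pow_mul c k m).symm⟩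

theorem exists_pow_mul_mem_lowerCentralSeries (n s : ℕ) {g : G}
    (hg : g ∈ Subgroup.closure (Set.range fun y : G => y ^ n ^ s)) :
    ∃ y, ∃ z ∈ (⊤ : Subgroup G).lowerCentralSeries s, y ^ n * z = g := by
  induction s generalizing G with
  | zero => exact ⟨1, g, mem_top g, by rw [one_pow, one_mul]⟩
  | succ s ih =>
    set H := closure (Set.range fun y : G => y ^ n)
    have hgH : g ∈ (closure (Set.range fun y : H => y ^ n ^ s)).map H.subtype := by
      rw [MonoidHom.map_closure, ← Set.range_comp]
      refine closure_mono ?_ hg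
      rintro _ ⟨y, rfl⟩
      exact ⟨⟨y ^ n, subset_closure ⟨y, rfl⟩⟩, by simp [pow_succ', pow_mul]⟩
    obtain ⟨g', hg', rfl⟩ := hgH
    obtain ⟨y, z, hz, rfl⟩ := ih hg'
    have hzH : (z : G) ∈ H.lowerCentralSeries s := by
      rw [← top_subtype_lowerCentralSeries]
      exact mem_map_of_mem _ hz
    have hz' := lowerCentralSeries_closure_range_pow_le n s hzH
    rw [pow_succ] at hz'
    replace hz' := sup_le_sup_left (closure_image_pow_mul_le _ (n ^ s) n) _ hz'
    simpa using exists_pow_mul_eq_pow_mul_of_mem_sup le_rfl n (y : G) hz'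

end

theorem stmt2_general {G : Type*} [Group G] (s : ℕ) (hs : (⊤ : Subgroup G).lowerCentralSeries s = ⊥)
    (n : ℕ) :
    ∀ g ∈ Subgroup.closure {x : G | ∃ y : G, y ^ (n ^ s) = x}, ∃ y : G, y ^ n = g := by
  intro g hg
  obtain ⟨y, z, hz, rfl⟩ := exists_pow_mul_mem_lowerCentralSeries n s hg
  rw [hs, mem_bot] at hz
  exact ⟨y, by rw [hz, mul_one]⟩

/-- In a nilpotent group of class `s`, the subgroup generated by `(n^s)`-th powers is
contained in the set of `n`-th powers. Here class `s` means `γ_{s+1}(G) = 1`, i.e.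
`lowerCentralSeries G s = ⊥`. -/
theorem stmt2 {G : Type*} [Group G] (s : ℕ) (hs : (⊤ : Subgroup G).lowerCentralSeries s = ⊥)
    (n : ℕ) (hn : 0 < n) :
    ∀ g ∈ Subgroup.closure {x : G | ∃ y : G, y ^ (n ^ s) = x}, ∃ y : G, y ^ n = g :=
  stmt2_general s hs n
end

section
/- Let G be a nilpotent p-group (every element has order a power of the prime p). Then the set G₀ of elements of infinite p-height is a normal subgroup of G. -/
/-!
Let `P n` be the subgroup generated by the `n`-th powers. If `A` is a layer of the lower
central series with `⁅A, G⁆` central, then `x ↦ ⁅a, x⁆` is a homomorphism for `a ∈ A`, so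
`K = ⁅A, P n⁆` consists of `n`-th powers of central elements. Modulo `K` the subgroup `P n`
has smaller nilpotency class, and induction on the class shows that in a group of class at
most `c + 1` every element of `P (n ^ (c + 1))` is an `n`-th power: lift an `n`-th root found
in `G ⧸ K` and correct it by a central element. Hence a product of two elements of infinite
`p`-height, being a product of `p ^ (n * (c + 1))`-th powers, is a `p ^ n`-th power.
-/

open Function
open scoped commutatorElement

namespace Subgroup

variable {G Q : Type*} [Group G] [Group Q]

variable (G) in
def powerSubgroup (n : ℕ) : Subgroup G :=
  closure (Set.range fun x : G => x ^ n)

theorem pow_mem_powerSubgroup (n : ℕ) (x : G) : x ^ n ∈ powerSubgroup G n :=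
  subset_closure ⟨x, rfl⟩

instance powerSubgroup_characteristic (n : ℕ) : (powerSubgroup G n).Characteristic := by
  refine characteristic_iff_map_le.mpr fun ϕ => ?_
  rw [powerSubgroup, MonoidHom.map_closure, closure_le]
  rintro _ ⟨_, ⟨x, rfl⟩, rfl⟩
  exact subset_closure ⟨ϕ x, by simp⟩

theorem map_powerSubgroup_le (f : G →* Q) (n : ℕ) :
    (powerSubgroup G n).map f ≤ powerSubgroup Q n := by
  rw [powerSubgroup, MonoidHom.map_closure, closure_le]
  rintro _ ⟨_, ⟨x, rfl⟩, rfl⟩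
  exact subset_closure ⟨f x, by simp⟩

theorem powerSubgroup_le_map_of_surjective {f : G →* Q} (hf : Surjective f) (n : ℕ) :
    powerSubgroup Q n ≤ (powerSubgroup G n).map f := by
  rw [powerSubgroup, closure_le]
  rintro _ ⟨y, rfl⟩
  obtain ⟨x, rfl⟩ := hf y
  exact ⟨x ^ n, pow_mem_powerSubgroup n x, map_pow f x n⟩

theorem powerSubgroup_mul_le_map (a b : ℕ) :
    powerSubgroup G (a * b) ≤ (powerSubgroup (powerSubgroup G a) b).map (powerSubgroup G a).subtype := by
  refine (closure_le _).mpr ?_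
  rintro _ ⟨x, rfl⟩
  exact ⟨⟨x ^ a, pow_mem_powerSubgroup a x⟩ ^ b, pow_mem_powerSubgroup _ _, by simp [pow_mul]⟩

variable (G) in
def centralPowers (n : ℕ) : Subgroup G where
  carrier := {u | ∃ v ∈ center G, v ^ n = u}
  one_mem' := ⟨1, one_mem _, one_pow n⟩
  mul_mem' := by
    rintro _ _ ⟨v, hv, rfl⟩ ⟨w, hw, rfl⟩
    exact ⟨v * w, mul_mem hv hw, Commute.mul_pow (mem_center_iff.mp hw v) n⟩
  inv_mem' := by
    rintro _ ⟨v, hv, rfl⟩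
    exact ⟨v⁻¹, inv_mem hv, inv_pow v n⟩

def commutatorLeftHom (a : G) (ha : ∀ y, ⁅a, y⁆ ∈ center G) : G →* G where
  toFun y := ⁅a, y⁆
  map_one' := commutatorElement_one_right a
  map_mul' x y := by
    rw [commutatorElement_mul_right_eq_mul_conj, mul_assoc _ x, mem_center_iff.mp (ha y) x,
      ← mul_assoc, mul_inv_cancel_right]

theorem commutator_powerSubgroup_le_centralPowers {A : Subgroup G} (hA : ⁅A, ⊤⁆ ≤ center G)
    (n : ℕ) : ⁅A, powerSubgroup G n⁆ ≤ centralPowers G n := by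
  rw [commutator_le]
  intro a ha b hb
  have hcentral : ∀ y, ⁅a, y⁆ ∈ center G := fun y => hA (commutator_mem_commutator ha (mem_top y))
  suffices powerSubgroup G n ≤ (centralPowers G n).comap (commutatorLeftHom a hcentral) from this hb
  rw [powerSubgroup, closure_le]
  rintro _ ⟨x, rfl⟩
  exact ⟨⁅a, x⁆, hcentral x, (map_pow (commutatorLeftHom a hcentral) x n).symm⟩

theorem lowerCentralSeries_succ_eq_bot_of_commutator_eq_bot {W : Subgroup G} {c : ℕ}
    (h : ⁅(⊤ : Subgroup G).lowerCentralSeries c, W⁆ = ⊥) :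
    (⊤ : Subgroup W).lowerCentralSeries (c + 1) = ⊥ := by
  rw [← map_subtype_inj, map_bot, top_subtype_lowerCentralSeries, eq_bot_iff, ← h]
  exact commutator_mono (lowerCentralSeries_mono c le_top) le_rfl

theorem powerSubgroup_le_centralPowers (h : center G = ⊤) (n : ℕ) :
    powerSubgroup G n ≤ centralPowers G n :=
  (closure_le _).mpr fun _ ⟨x, hx⟩ => ⟨x, h ▸ mem_top x, hx⟩

theorem lowerCentralSeries_le_center_of_succ_eq_bot {c : ℕ}
    (h : (⊤ : Subgroup G).lowerCentralSeries (c + 1) = ⊥) :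
    (⊤ : Subgroup G).lowerCentralSeries c ≤ center G := by
  rwa [lowerCentralSeries_succ, commutator_eq_bot_iff_le_centralizer, coe_top,
    centralizer_univ] at h

theorem commutator_lowerCentralSeries_powerSubgroup_quotient_eq_bot (N : Subgroup G) [N.Normal]
    {c n : ℕ} (hN : ⁅(⊤ : Subgroup G).lowerCentralSeries c, powerSubgroup G n⁆ ≤ N) :
    ⁅(⊤ : Subgroup (G ⧸ N)).lowerCentralSeries c, powerSubgroup (G ⧸ N) n⁆ = ⊥ := by
  have hπ := QuotientGroup.mk'_surjective N
  have hN : ⁅(⊤ : Subgroup G).lowerCentralSeries c, powerSubgroup G n⁆.map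
      (QuotientGroup.mk' N) = ⊥ := by
    rwa [map_eq_bot_iff, QuotientGroup.ker_mk']
  rw [eq_bot_iff, ← hN, map_commutator, map_lowerCentralSeries, map_top_of_surjective _ hπ]
  exact commutator_mono le_rfl (powerSubgroup_le_map_of_surjective hπ n)

theorem exists_pow_eq_of_mem_powerSubgroup (n c : ℕ)
    (hG : (⊤ : Subgroup G).lowerCentralSeries (c + 1) = ⊥) :
    ∀ g ∈ powerSubgroup G (n ^ (c + 1)), ∃ z : G, z ^ n = g := by
  induction c generalizing G with
  | zero =>
    intro g hg
    have hcenter : center G = ⊤ := top_le_iff.mp (lowerCentralSeries_le_center_of_succ_eq_bot hG)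
    obtain ⟨v, -, hv⟩ := powerSubgroup_le_centralPowers hcenter n (by rwa [zero_add, pow_one] at hg)
    exact ⟨v, hv⟩
  | succ c ih =>
    intro g hg
    let K := ⁅(⊤ : Subgroup G).lowerCentralSeries c, powerSubgroup G n⁆
    let π := QuotientGroup.mk' K
    have hK : K ≤ centralPowers G n := commutator_powerSubgroup_le_centralPowers
      (lowerCentralSeries_le_center_of_succ_eq_bot hG) n
    have hW : (⊤ : Subgroup (powerSubgroup (G ⧸ K) n)).lowerCentralSeries (c + 1) = ⊥ :=
      lowerCentralSeries_succ_eq_bot_of_commutator_eq_bot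
        (commutator_lowerCentralSeries_powerSubgroup_quotient_eq_bot K le_rfl)
    rw [pow_succ'] at hg
    obtain ⟨w', hw', hw'g⟩ := powerSubgroup_mul_le_map n (n ^ (c + 1))
      (map_powerSubgroup_le π _ (mem_map_of_mem π hg))
    obtain ⟨w, rfl⟩ := ih hW w' hw'
    obtain ⟨z, hz⟩ := QuotientGroup.mk'_surjective K w
    have hzg : π (z ^ n) = π g := by
      rw [map_pow, hz, ← hw'g]
      rfl
    obtain ⟨v, hv, hvg⟩ := hK (QuotientGroup.eq.mp hzg)
    exact ⟨z * v, by rw [Commute.mul_pow (mem_center_iff.mp hv z), hvg, mul_inv_cancel_left]⟩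

variable (G) in
def infiniteHeight [Group.IsNilpotent G] (p : ℕ) : Subgroup G where
  carrier := {g | ∀ n : ℕ, ∃ h : G, h ^ (p ^ n) = g}
  one_mem' _ := ⟨1, one_pow _⟩
  mul_mem' {a b} ha hb n := by
    let c := Group.nilpotencyClass G
    have hpow : ∀ g ∈ {g : G | ∀ n : ℕ, ∃ h : G, h ^ (p ^ n) = g},
        g ∈ powerSubgroup G ((p ^ n) ^ (c + 1)) := by
      intro g hg
      obtain ⟨h, rfl⟩ := hg (n * (c + 1))
      rw [← pow_mul]
      exact pow_mem_powerSubgroup _ h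
    exact exists_pow_eq_of_mem_powerSubgroup (p ^ n) c
      (lowerCentralSeries_eq_bot_iff_nilpotencyClass_le.mpr c.le_succ) (a * b)
      (mul_mem (hpow a ha) (hpow b hb))
  inv_mem' {a} ha n := by
    obtain ⟨h, rfl⟩ := ha n
    exact ⟨h⁻¹, inv_pow h _⟩

instance infiniteHeight_normal [Group.IsNilpotent G] (p : ℕ) : (infiniteHeight G p).Normal where
  conj_mem a ha g n := by
    obtain ⟨h, rfl⟩ := ha n
    exact ⟨g * h * g⁻¹, conj_pow⟩

end Subgroup

theorem stmt3_general {G : Type*} [Group G] [Group.IsNilpotent G] (p : ℕ) :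
    ∃ N : Subgroup G, (↑N = {g : G | ∀ n : ℕ, ∃ h : G, h ^ (p ^ n) = g}) ∧ N.Normal :=
  ⟨Subgroup.infiniteHeight G p, rfl, inferInstance⟩

/-- In a nilpotent `p`-group, the set of elements of infinite `p`-height is a normal
subgroup. -/
theorem stmt3 {G : Type*} [Group G] [Group.IsNilpotent G] (p : ℕ) (hp : p.Prime)
    (hpG : IsPGroup p G) :
    ∃ N : Subgroup G, (↑N = {g : G | ∀ n : ℕ, ∃ h : G, h ^ (p ^ n) = g}) ∧ N.Normal :=
  stmt3_general p
end

section
/- Let G be a nilpotent p-group and G₀ the subgroup of elements of infinite p-height. Then the quotient group G/G₀ has no nontrivial elements of infinite p-height. -/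
/-!
Write `x = x₀ N`. For every `n`, `x₀ = h ^ p ^ n * w ^ p ^ n` with `w ∈ N`, so `x₀` lies in the
agemo subgroup `℧ₙ(G)` generated by the `p ^ n`-th powers, for every `n`.

In a group of nilpotency class `< c` one has the uniform Hall–Petrescu estimate
`a ^ p ^ N * b ^ p ^ N = (a * b) ^ p ^ N * z` with `z ∈ ℧_{N - E}(D)` for every normal `D ∋ ⁅a, b⁆`,
where `E` depends only on `c` and `p`. Indeed `(a * b) ^ (-n) * a ^ n * b ^ n` is a product of
powers `dₖ ^ fₖ(n)` with `dₖ ∈ ⁅G, G⁆` and `fₖ` integer-valued polynomials vanishing at `0`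
(collection with polynomial exponents along an N-series). Computing this once in the free
nilpotent group on two generators bounds the degrees by some `E`, and then
`p ^ (N - E) ∣ fₖ(p ^ N)`.

A downward induction along the lower central series then shows that, for `n` large, every
element of `℧ₙ(G)` is a `p ^ m`-th power. Hence `x₀` has infinite height, so `x₀ ∈ N`.
-/

open Finset

open scoped commutatorElement

def IsNumericalPolyLE (B : ℕ) (f : ℕ → ℤ) : Prop :=
  ∃ c : ℕ → ℤ, ∀ n, f n = ∑ j ∈ range (B + 1), c j * n.choose j

def IsNumericalPoly (f : ℕ → ℤ) : Prop :=
  ∃ B, IsNumericalPolyLE B f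

theorem Nat.pow_sub_dvd_choose_prime_pow {p B N k : ℕ} (hp : p.Prime) (hk0 : k ≠ 0)
    (hkB : k ≤ B) : p ^ (N - B) ∣ (p ^ N).choose k := by
  rcases le_or_gt k (p ^ N) with hkN | hkN
  · rw [hp.pow_dvd_iff_le_factorization (Nat.choose_pos hkN).ne',
      Nat.factorization_choose_prime_pow hp hkN hk0]
    have := Nat.factorization_lt p hk0
    omega
  · rw [Nat.choose_eq_zero_of_lt hkN]
    exact dvd_zero _

theorem Nat.sum_range_choose_eq_choose_succ (j n : ℕ) :
    ∑ k ∈ range n, (k.choose j : ℤ) = (n.choose (j + 1) : ℤ) := by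
  induction n with
  | zero => simp
  | succ n ih =>
    rw [sum_range_succ, ih, Nat.choose_succ_succ]
    push_cast
    ring

namespace IsNumericalPolyLE

theorem mono {B B' : ℕ} {f : ℕ → ℤ} (hBB' : B ≤ B') (hf : IsNumericalPolyLE B f) :
    IsNumericalPolyLE B' f := by
  obtain ⟨c, hc⟩ := hf
  refine ⟨fun j => if j ≤ B then c j else 0, fun n => ?_⟩
  rw [hc n, ← sum_subset (range_subset_range.2 (by omega : B + 1 ≤ B' + 1))]
  · refine sum_congr rfl fun j hj => ?_
    simp only [mem_range] at hj
    simp [show j ≤ B by omega]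
  · intro j _ hj
    simp only [mem_range] at hj
    simp [show ¬j ≤ B by omega]

theorem const (k : ℤ) : IsNumericalPolyLE 0 fun _ => k :=
  ⟨fun _ => k, fun n => by simp⟩

theorem natCast : IsNumericalPolyLE 1 fun n => (n : ℤ) :=
  ⟨fun j => if j = 1 then 1 else 0, fun n => by simp⟩

theorem neg {B : ℕ} {f : ℕ → ℤ} (hf : IsNumericalPolyLE B f) :
    IsNumericalPolyLE B fun n => -f n := by
  obtain ⟨c, hc⟩ := hf
  exact ⟨fun j => -c j, fun n => by simp [hc n, sum_neg_distrib]⟩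

theorem add {B₁ B₂ : ℕ} {f g : ℕ → ℤ} (hf : IsNumericalPolyLE B₁ f)
    (hg : IsNumericalPolyLE B₂ g) : IsNumericalPolyLE (max B₁ B₂) fun n => f n + g n := by
  obtain ⟨c, hc⟩ := hf.mono (le_max_left B₁ B₂)
  obtain ⟨d, hd⟩ := hg.mono (le_max_right B₁ B₂)
  exact ⟨fun j => c j + d j, fun n => by simp [hc n, hd n, sum_add_distrib, add_mul]⟩

theorem apply_eq_apply_zero {f : ℕ → ℤ} (hf : IsNumericalPolyLE 0 f) (n : ℕ) : f n = f 0 := by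
  obtain ⟨c, hc⟩ := hf
  simp [hc n, hc 0]

theorem fwdDiff {B : ℕ} {f : ℕ → ℤ} (hf : IsNumericalPolyLE (B + 1) f) :
    IsNumericalPolyLE B fun n => f (n + 1) - f n := by
  obtain ⟨c, hc⟩ := hf
  refine ⟨fun j => c (j + 1), fun n => ?_⟩
  simp only [hc, ← sum_sub_distrib, ← mul_sub]
  rw [sum_range_succ']
  simp [Nat.choose_succ_succ]

theorem comp_succ {B : ℕ} {f : ℕ → ℤ} (hf : IsNumericalPolyLE B f) :
    IsNumericalPolyLE B fun n => f (n + 1) := by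
  cases B with
  | zero => exact ⟨fun _ => f 0, fun n => by simp [hf.apply_eq_apply_zero (n + 1)]⟩
  | succ B =>
    have h := hf.add hf.fwdDiff
    rw [max_eq_left (Nat.le_succ B)] at h
    simpa using h

theorem partialSum {B : ℕ} {f : ℕ → ℤ} (hf : IsNumericalPolyLE B f) :
    IsNumericalPolyLE (B + 1) fun n => ∑ k ∈ range n, f k := by
  obtain ⟨c, hc⟩ := hf
  refine ⟨fun j => if j = 0 then 0 else c (j - 1), fun n => ?_⟩
  simp only [hc, sum_comm (s := range n), ← mul_sum, Nat.sum_range_choose_eq_choose_succ]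
  rw [sum_range_succ' _ (B + 1)]
  simp

theorem pow_sub_dvd_apply_prime_pow {p B : ℕ} (hp : p.Prime) {f : ℕ → ℤ}
    (hf : IsNumericalPolyLE B f) (hf0 : f 0 = 0) (N : ℕ) : (p : ℤ) ^ (N - B) ∣ f (p ^ N) := by
  obtain ⟨c, hc⟩ := hf
  have hc0 : c 0 = 0 := by simpa [hc 0, sum_range_succ'] using hf0
  rw [hc]
  refine dvd_sum fun j hj => ?_
  rcases eq_or_ne j 0 with rfl | hj0
  · simp [hc0]
  · refine Dvd.dvd.mul_left ?_ _
    exact_mod_cast Nat.pow_sub_dvd_choose_prime_pow hp hj0 (by simpa [Nat.lt_succ_iff] using hj)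

end IsNumericalPolyLE

namespace IsNumericalPoly

theorem const (k : ℤ) : IsNumericalPoly fun _ => k := ⟨0, .const k⟩

theorem natCast : IsNumericalPoly fun n => (n : ℤ) := ⟨1, .natCast⟩

theorem neg {f : ℕ → ℤ} (hf : IsNumericalPoly f) : IsNumericalPoly fun n => -f n :=
  let ⟨B, hB⟩ := hf; ⟨B, hB.neg⟩

theorem partialSum {f : ℕ → ℤ} (hf : IsNumericalPoly f) :
    IsNumericalPoly fun n => ∑ k ∈ range n, f k :=
  let ⟨B, hB⟩ := hf; ⟨B + 1, hB.partialSum⟩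

theorem exists_isNumericalPolyLE (s : List (ℕ → ℤ)) (hs : ∀ f ∈ s, IsNumericalPoly f) :
    ∃ B, ∀ f ∈ s, IsNumericalPolyLE B f := by
  induction s with
  | nil => exact ⟨0, by simp⟩
  | cons f s ih =>
    obtain ⟨B₁, hB₁⟩ := hs f (List.mem_cons_self ..)
    obtain ⟨B₂, hB₂⟩ := ih fun g hg => hs g (List.mem_cons_of_mem _ hg)
    refine ⟨max B₁ B₂, fun g hg => ?_⟩
    rcases List.mem_cons.1 hg with rfl | hg
    · exact hB₁.mono (le_max_left _ _)
    · exact (hB₂ g hg).mono (le_max_right _ _)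

end IsNumericalPoly

namespace Subgroup

variable {G : Type*} [Group G]

def agemo (p r : ℕ) (D : Subgroup G) : Subgroup G :=
  closure {x | ∃ d ∈ D, d ^ p ^ r = x}

theorem pow_mem_agemo (p r : ℕ) {D : Subgroup G} {d : G} (hd : d ∈ D) :
    d ^ p ^ r ∈ agemo p r D :=
  subset_closure ⟨d, hd, rfl⟩

theorem agemo_antitone (p : ℕ) {r r' : ℕ} (h : r' ≤ r) (D : Subgroup G) :
    agemo p r D ≤ agemo p r' D := by
  rw [agemo, closure_le]
  rintro _ ⟨d, hd, rfl⟩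
  rw [← Nat.sub_add_cancel h, pow_add, pow_mul]
  exact pow_mem_agemo p r' (pow_mem hd _)

instance agemo_normal (p r : ℕ) (D : Subgroup G) [D.Normal] : (agemo p r D).Normal := by
  rw [← normalizer_eq_top_iff, eq_top_iff, agemo, le_normalizer_closure_iff]
  rintro g - _ ⟨d, hd, rfl⟩
  rw [← conj_pow]
  exact subset_closure ⟨_, ‹D.Normal›.conj_mem d hd g, rfl⟩

@[simp]
theorem agemo_bot (p r : ℕ) : agemo p r (⊥ : Subgroup G) = ⊥ := by
  rw [eq_bot_iff, agemo, closure_le]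
  rintro _ ⟨d, hd, rfl⟩
  simp_all

theorem commutator_commutator_le_of_rotate {H₁ H₂ H₃ N : Subgroup G} [N.Normal]
    (h₁ : ⁅⁅H₂, H₃⁆, H₁⁆ ≤ N) (h₂ : ⁅⁅H₃, H₁⁆, H₂⁆ ≤ N) : ⁅⁅H₁, H₂⁆, H₃⁆ ≤ N := by
  rw [← QuotientGroup.ker_mk' N, ← map_eq_bot_iff] at *
  simp only [map_commutator] at *
  exact commutator_commutator_eq_bot_of_rotate h₁ h₂

theorem commutator_lowerCentralSeries_le (u v : ℕ) :
    ⁅lowerCentralSeries (⊤ : Subgroup G) u, lowerCentralSeries (⊤ : Subgroup G) v⁆ ≤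
      lowerCentralSeries ⊤ (u + v + 1) := by
  induction v generalizing u with
  | zero => rfl
  | succ v ih =>
    rw [lowerCentralSeries_succ, commutator_comm]
    apply commutator_commutator_le_of_rotate
    · rw [commutator_comm ⊤, ← lowerCentralSeries_succ]
      exact (ih (u + 1)).trans_eq (by ring_nf)
    · exact (commutator_mono (ih u) le_rfl).trans_eq (by rw [← lowerCentralSeries_succ]; ring_nf)

theorem map_lowerCentralSeries_of_surjective {K : Type*} [Group K] {f : G →* K}
    (hf : Function.Surjective f) (n : ℕ) :
    (lowerCentralSeries (⊤ : Subgroup G) n).map f = lowerCentralSeries ⊤ n := by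
  rw [map_lowerCentralSeries, map_top_of_surjective f hf]

theorem commutator_le_of_closure_eq_top {s : Set G} (hs : closure s = ⊤) {N : Subgroup G}
    [N.Normal] (h : ∀ x ∈ s, ∀ y ∈ s, ⁅x, y⁆ ∈ N) : _root_.commutator G ≤ N := by
  rw [← QuotientGroup.ker_mk' N, ← map_eq_bot_iff, _root_.commutator_def, map_commutator, ← hs,
    MonoidHom.map_closure, commutator_self_eq_bot_iff]
  refine isMulCommutative_closure ?_
  rintro _ ⟨x, hx, rfl⟩ _ ⟨y, hy, rfl⟩
  rw [← commutatorElement_eq_one_iff_mul_comm, ← map_commutatorElement, ← MonoidHom.mem_ker,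
    QuotientGroup.ker_mk']
  exact h x hx y hy

end Subgroup

structure NSeries (H : Type*) [Group H] where
  term : ℕ → Subgroup H
  antitone : Antitone term
  commutator_mem {i j : ℕ} (hi : 1 ≤ i) (hj : 1 ≤ j) {x y : H} :
    x ∈ term i → y ∈ term j → ⁅x, y⁆ ∈ term (i + j)
  length : ℕ
  term_length : term length = ⊥

structure PolyPow (H : Type*) where
  base : H
  exponent : ℕ → ℤ
  weight : ℕ

namespace PolyPow

variable {H : Type*}

def inv (m : PolyPow H) : PolyPow H :=
  ⟨m.base, fun n => -m.exponent n, m.weight⟩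

def invList (L : List (PolyPow H)) : List (PolyPow H) :=
  (L.map inv).reverse

theorem forall_mem_invList {L : List (PolyPow H)} {P : PolyPow H → Prop} :
    (∀ m ∈ invList L, P m) ↔ ∀ m ∈ L, P m.inv := by
  simp [invList]

variable [Group H]

structure IsAdmissible (𝒜 : NSeries H) (w : ℕ) (m : PolyPow H) : Prop where
  base_mem : m.base ∈ 𝒜.term m.weight
  isNumericalPoly : IsNumericalPoly m.exponent
  le_weight : w ≤ m.weight

theorem IsAdmissible.mono {𝒜 : NSeries H} {w w' : ℕ} {m : PolyPow H} (h : m.IsAdmissible 𝒜 w)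
    (hw : w' ≤ w) : m.IsAdmissible 𝒜 w' :=
  ⟨h.base_mem, h.isNumericalPoly, hw.trans h.le_weight⟩

theorem IsAdmissible.inv {𝒜 : NSeries H} {w : ℕ} {m : PolyPow H} (h : m.IsAdmissible 𝒜 w) :
    m.inv.IsAdmissible 𝒜 w :=
  ⟨h.base_mem, h.isNumericalPoly.neg, h.le_weight⟩

end PolyPow

section PolyWord

variable {H : Type*} [Group H] (𝒜 : NSeries H)

open PolyPow

def evalProd (L : List (PolyPow H)) (n : ℕ) : H :=
  (L.map fun m => m.base ^ m.exponent n).prod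

def partialProd (X : ℕ → H) : ℕ → H
  | 0 => 1
  | n + 1 => X n * partialProd X n

@[simp]
theorem evalProd_nil (n : ℕ) : evalProd ([] : List (PolyPow H)) n = 1 := rfl

@[simp]
theorem evalProd_cons (m : PolyPow H) (L : List (PolyPow H)) (n : ℕ) :
    evalProd (m :: L) n = m.base ^ m.exponent n * evalProd L n := by
  simp [evalProd]

@[simp]
theorem evalProd_append (L₁ L₂ : List (PolyPow H)) (n : ℕ) :
    evalProd (L₁ ++ L₂) n = evalProd L₁ n * evalProd L₂ n := by
  simp [evalProd]

@[simp]
theorem evalProd_invList (L : List (PolyPow H)) (n : ℕ) :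
    evalProd (invList L) n = (evalProd L n)⁻¹ := by
  induction L with
  | nil => simp [invList]
  | cons m L ih => simp_all [invList, evalProd, inv]

theorem evalProd_eq_one {w : ℕ} (hw : 𝒜.length ≤ w) {L : List (PolyPow H)}
    (hL : ∀ m ∈ L, m.IsAdmissible 𝒜 w) (n : ℕ) : evalProd L n = 1 := by
  induction L with
  | nil => rfl
  | cons m L ih =>
    have hm := hL m List.mem_cons_self
    have : m.base = 1 := by
      simpa [𝒜.term_length] using 𝒜.antitone (hw.trans hm.le_weight) hm.base_mem
    simp [this, ih fun x hx => hL x (List.mem_cons_of_mem _ hx)]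

@[simp]
theorem partialProd_one (n : ℕ) : partialProd (fun _ => (1 : H)) n = 1 := by
  induction n with
  | zero => rfl
  | succ n ih => simp [partialProd, ih]

theorem partialProd_eq_mul_partialProd_mul_inv {X Y g : ℕ → H}
    (h : ∀ n, X n = g (n + 1) * Y n * (g n)⁻¹) (n : ℕ) :
    partialProd X n = g n * partialProd Y n * (g 0)⁻¹ := by
  induction n with
  | zero => simp [partialProd]
  | succ n ih => simp only [partialProd, h, ih]; group

theorem eq_partialProd_mul_mul_inv_partialProd {c X Y : ℕ → H}
    (h : ∀ n, c (n + 1) = X n * c n * Y n) (n : ℕ) :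
    c n = partialProd X n * c 0 * (partialProd (fun k => (Y k)⁻¹) n)⁻¹ := by
  induction n with
  | zero => simp [partialProd]
  | succ n ih => rw [h, ih]; simp only [partialProd]; group

end PolyWord

section Engine

variable {H : Type*} [Group H] (𝒜 : NSeries H)

open PolyPow

/- Exponents vanishing at `0` are tracked because only they become divisible by a large power
of `p` at `n = p ^ N`. -/
def ConjRep (w i : ℕ) : Prop :=
  ∀ u ∈ 𝒜.term i, ∀ h : ℕ → ℤ, IsNumericalPoly h →
    ∀ L : List (PolyPow H), (∀ m ∈ L, m.IsAdmissible 𝒜 w) →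
      ∃ L' : List (PolyPow H), (∀ m ∈ L', m.IsAdmissible 𝒜 w) ∧
        L'.countP (·.weight = w) ≤ L.countP (·.weight = w) ∧
        ((∀ m ∈ L, m.exponent 0 = 0) → ∀ m ∈ L', m.exponent 0 = 0) ∧
        ∀ n, evalProd L' n = u ^ h n * evalProd L n * (u ^ h n)⁻¹

def CommRep (i j : ℕ) : Prop :=
  ∀ d ∈ 𝒜.term i, ∀ e ∈ 𝒜.term j, ∀ f g : ℕ → ℤ, IsNumericalPoly f → IsNumericalPoly g →
    ∃ L : List (PolyPow H), (∀ m ∈ L, m.IsAdmissible 𝒜 (i + j)) ∧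
      ((f 0 = 0 ∨ g 0 = 0) → ∀ m ∈ L, m.exponent 0 = 0) ∧
      ∀ n, evalProd L n = ⁅d ^ f n, e ^ g n⁆

def PartialProdRep (w : ℕ) : Prop :=
  ∀ L : List (PolyPow H), (∀ m ∈ L, m.IsAdmissible 𝒜 w) →
    ∃ L' : List (PolyPow H), (∀ m ∈ L', m.IsAdmissible 𝒜 w) ∧ (∀ m ∈ L', m.exponent 0 = 0) ∧
      ∀ n, evalProd L' n = partialProd (evalProd L) n

variable {𝒜}

theorem conjRep_of_commRep {w i : ℕ} (hi : 1 ≤ i) (hcomm : ∀ v, w ≤ v → CommRep 𝒜 v i) :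
    ConjRep 𝒜 w i := by
  intro u hu h hh L hL
  induction L with
  | nil => exact ⟨[], by simp, by simp, by simp, by simp⟩
  | cons m L ih =>
    obtain ⟨hm, hL⟩ := List.forall_mem_cons.1 hL
    obtain ⟨L', hL'adm, hL'count, hL'van, hL'eval⟩ := ih hL
    -- `u dᶠ u⁻¹ = dᶠ ⁅d⁻ᶠ, u⁆`, and the commutator only contributes weights `> w`
    obtain ⟨M, hMadm, hMvan, hMeval⟩ := hcomm m.weight hm.le_weight m.base hm.base_mem u hu
      (fun n => -m.exponent n) h hm.isNumericalPoly.neg hh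
    have hMcount : M.countP (·.weight = w) = 0 := List.countP_eq_zero.2 fun x hx => by
      have := (hMadm x hx).le_weight
      have := hm.le_weight
      simp only [decide_eq_true_eq]
      omega
    refine ⟨m :: (M ++ L'), List.forall_mem_cons.2 ⟨hm, fun x hx => ?_⟩, ?_, ?_, fun n => ?_⟩
    · rcases List.mem_append.1 hx with hx | hx
      exacts [(hMadm x hx).mono (hm.le_weight.trans (Nat.le_add_right _ _)), hL'adm x hx]
    · simp only [List.countP_cons, List.countP_append, hMcount, zero_add]
      omega
    · rintro hL0
      obtain ⟨hm0, hL0⟩ := List.forall_mem_cons.1 hL0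
      refine List.forall_mem_cons.2 ⟨hm0, fun x hx => ?_⟩
      rcases List.mem_append.1 hx with hx | hx
      exacts [hMvan (Or.inl (by simp [hm0])) x hx, hL'van hL0 x hx]
    · simp only [evalProd_cons, evalProd_append, hMeval, hL'eval, commutatorElement_def, zpow_neg]
      group

theorem partialProdRep_of_conjRep {w : ℕ} (hnext : PartialProdRep 𝒜 (w + 1))
    (hconj : ConjRep 𝒜 w w) : PartialProdRep 𝒜 w := by
  intro L hL
  induction hk : L.countP (·.weight = w) using Nat.strong_induction_on generalizing L with
  | _ k ih =>
    rcases Nat.eq_zero_or_pos k with rfl | hpos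
    · have hL' : ∀ m ∈ L, m.IsAdmissible 𝒜 (w + 1) := fun m hm => by
        have := (hL m hm).le_weight
        have := List.countP_eq_zero.1 hk m hm
        exact ⟨(hL m hm).base_mem, (hL m hm).isNumericalPoly, by simp at this; omega⟩
      obtain ⟨L', hL'adm, hL'van, hL'eval⟩ := hnext L hL'
      exact ⟨L', fun m hm => (hL'adm m hm).mono (Nat.le_succ w), hL'van, hL'eval⟩
    -- Move one factor `dᶠ` of weight `w` to the front: the partial product is
    -- `d ^ (∑ k < n, f k)` times a partial product with fewer factors of weight `w`.
    obtain ⟨m, hmL, hmw⟩ := List.countP_pos_iff.1 (hk ▸ hpos)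
    obtain ⟨P, S, rfl⟩ := List.append_of_mem hmL
    simp only [decide_eq_true_eq] at hmw
    simp only [List.forall_mem_append, List.forall_mem_cons] at hL
    obtain ⟨hP, hm, hS⟩ := hL
    have hd := hmw ▸ hm.base_mem
    obtain ⟨P', hP'adm, hP'count, -, hP'eval⟩ :=
      hconj m.base hd (fun n => -m.exponent n) hm.isNumericalPoly.neg P hP
    set F : ℕ → ℤ := fun n => ∑ k ∈ range n, m.exponent k
    obtain ⟨M, hMadm, hMcount, -, hMeval⟩ := hconj m.base hd (fun n => -F n)
      hm.isNumericalPoly.partialSum.neg (P' ++ S) (List.forall_mem_append.2 ⟨hP'adm, hS⟩)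
    have hMk : M.countP (·.weight = w) < k := by
      simp only [List.countP_append, List.countP_cons, hmw] at hk hMcount
      simp at hk
      omega
    obtain ⟨Mr, hMradm, hMrvan, hMreval⟩ := ih _ hMk M hMadm rfl
    have hX : ∀ n, evalProd (P ++ m :: S) n =
        m.base ^ F (n + 1) * evalProd M n * (m.base ^ F n)⁻¹ := by
      intro n
      simp only [hMeval, evalProd_append, hP'eval, evalProd_cons, F, sum_range_succ, zpow_add,
        zpow_neg]
      group
    refine ⟨⟨m.base, F, m.weight⟩ :: Mr, List.forall_mem_cons.2
      ⟨⟨hm.base_mem, hm.isNumericalPoly.partialSum, hm.le_weight⟩, hMradm⟩,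
      List.forall_mem_cons.2 ⟨by simp [F], hMrvan⟩, fun n => ?_⟩
    rw [partialProd_eq_mul_partialProd_mul_inv (Y := evalProd M) (g := fun n => m.base ^ F n) hX n,
      evalProd_cons, hMreval]
    simp [F]

theorem commutatorElement_mul_mul (u δ v ε : H) :
    ⁅u * δ, v * ε⁆ = u * ⁅δ, v * ε⁆ * u⁻¹ * ⁅u, v⁆ * (v * ⁅u, ε⁆ * v⁻¹) := by
  simp only [commutatorElement_def]
  group

theorem exists_rep_commutator_zpow {i j : ℕ} {d e : H} (hd : d ∈ 𝒜.term i)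
    (he : e ∈ 𝒜.term j) (hi : 1 ≤ i) (hj : 1 ≤ j) (a b : ℤ) :
    ∃ K : List (PolyPow H), (∀ m ∈ K, m.IsAdmissible 𝒜 (i + j)) ∧
      ((a = 0 ∨ b = 0) → ∀ m ∈ K, m.exponent 0 = 0) ∧ ∀ n, evalProd K n = ⁅d ^ a, e ^ b⁆ := by
  by_cases hab : a = 0 ∨ b = 0
  · refine ⟨[], by simp, by simp, fun n => ?_⟩
    rcases hab with rfl | rfl <;> simp
  · refine ⟨[⟨⁅d ^ a, e ^ b⁆, fun _ => 1, i + j⟩], ?_, fun h => absurd h hab, by simp⟩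
    simpa using ⟨𝒜.commutator_mem hi hj (zpow_mem hd a) (zpow_mem he b), .const 1, le_rfl⟩

theorem exists_rep_commutator_of_increments {i j : ℕ} (hi : 1 ≤ i) (hj : 1 ≤ j)
    (hpp : PartialProdRep 𝒜 (i + j)) {d e : H} (hd : d ∈ 𝒜.term i) (he : e ∈ 𝒜.term j)
    {f g : ℕ → ℤ} {LX LY : List (PolyPow H)}
    (hLX : ∀ m ∈ LX, m.IsAdmissible 𝒜 (i + j)) (hLY : ∀ m ∈ LY, m.IsAdmissible 𝒜 (i + j))
    (hX : ∀ n, evalProd LX n = d ^ f n * ⁅d ^ (f (n + 1) - f n), e ^ g (n + 1)⁆ * (d ^ f n)⁻¹)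
    (hY : ∀ n, evalProd LY n = (e ^ g n * ⁅d ^ f n, e ^ (g (n + 1) - g n)⁆ * (e ^ g n)⁻¹)⁻¹) :
    ∃ L : List (PolyPow H), (∀ m ∈ L, m.IsAdmissible 𝒜 (i + j)) ∧
      ((f 0 = 0 ∨ g 0 = 0) → ∀ m ∈ L, m.exponent 0 = 0) ∧
      ∀ n, evalProd L n = ⁅d ^ f n, e ^ g n⁆ := by
  have hstep : ∀ n, ⁅d ^ f (n + 1), e ^ g (n + 1)⁆ =
      evalProd LX n * ⁅d ^ f n, e ^ g n⁆ * (evalProd LY n)⁻¹ := by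
    intro n
    have hf : d ^ f (n + 1) = d ^ f n * d ^ (f (n + 1) - f n) := by rw [← zpow_add, add_sub_cancel]
    have hg : e ^ g (n + 1) = e ^ g n * e ^ (g (n + 1) - g n) := by rw [← zpow_add, add_sub_cancel]
    rw [hX, hY, inv_inv, hf, hg, commutatorElement_mul_mul]
  obtain ⟨K, hKadm, hKvan, hKeval⟩ := exists_rep_commutator_zpow hd he hi hj (f 0) (g 0)
  obtain ⟨LX', hLX'adm, hLX'van, hLX'eval⟩ := hpp LX hLX
  obtain ⟨LY', hLY'adm, hLY'van, hLY'eval⟩ := hpp LY hLY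
  refine ⟨LX' ++ (K ++ invList LY'), ?_, fun h0 => ?_, fun n => ?_⟩
  · simp only [List.forall_mem_append, forall_mem_invList]
    exact ⟨hLX'adm, hKadm, fun m hm => (hLY'adm m hm).inv⟩
  · simp only [List.forall_mem_append, forall_mem_invList]
    exact ⟨hLX'van, hKvan h0, fun m hm => by simp [inv, hLY'van m hm]⟩
  · rw [eq_partialProd_mul_mul_inv_partialProd (c := fun n => ⁅d ^ f n, e ^ g n⁆) hstep n]
    simp [hLX'eval, hKeval, hLY'eval, mul_assoc]

theorem commRep_of_conjRep {i j : ℕ} (hi : 1 ≤ i) (hj : 1 ≤ j)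
    (hpp : PartialProdRep 𝒜 (i + j)) (hconj_i : ConjRep 𝒜 (i + j) i)
    (hconj_j : ConjRep 𝒜 (i + j) j) : CommRep 𝒜 i j := by
  rintro d hd e he f g ⟨Bf, hf⟩ ⟨Bg, hg⟩
  induction hB : Bf + Bg using Nat.strong_induction_on generalizing f g Bf Bg with
  | _ B ih =>
    obtain ⟨LX, hLX, hX⟩ : ∃ LX : List (PolyPow H), (∀ m ∈ LX, m.IsAdmissible 𝒜 (i + j)) ∧
        ∀ n, evalProd LX n = d ^ f n * ⁅d ^ (f (n + 1) - f n), e ^ g (n + 1)⁆ * (d ^ f n)⁻¹ := by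
      cases Bf with
      | zero => exact ⟨[], by simp, fun n => by simp [hf.apply_eq_apply_zero (n + 1),
          hf.apply_eq_apply_zero n]⟩
      | succ Bf =>
        obtain ⟨L, hL, -, hLeval⟩ := ih _ (by omega) _ _ _ hf.fwdDiff _ hg.comp_succ rfl
        obtain ⟨LX, hLX, -, -, hX⟩ := hconj_i d hd f ⟨_, hf⟩ L hL
        exact ⟨LX, hLX, fun n => by rw [hX, hLeval]⟩
    obtain ⟨LY, hLY, hY⟩ : ∃ LY : List (PolyPow H), (∀ m ∈ LY, m.IsAdmissible 𝒜 (i + j)) ∧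
        ∀ n, evalProd LY n = (e ^ g n * ⁅d ^ f n, e ^ (g (n + 1) - g n)⁆ * (e ^ g n)⁻¹)⁻¹ := by
      cases Bg with
      | zero => exact ⟨[], by simp, fun n => by simp [hg.apply_eq_apply_zero (n + 1),
          hg.apply_eq_apply_zero n]⟩
      | succ Bg =>
        obtain ⟨L, hL, -, hLeval⟩ := ih _ (by omega) _ _ _ hf _ hg.fwdDiff rfl
        obtain ⟨LY, hLY, -, -, hY⟩ := hconj_j e he g ⟨_, hg⟩ (invList L)
          (forall_mem_invList.2 fun m hm => (hL m hm).inv)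
        exact ⟨LY, hLY, fun n => by simp [hY, hLeval, mul_assoc]⟩
    exact exists_rep_commutator_of_increments hi hj hpp hd he hLX hLY hX hY

variable (𝒜) in
/- Downward induction on the weight `t`: commutators raise the weight, and everything of weight
`≥ 𝒜.length` is trivial. -/
structure RepFrom (t : ℕ) : Prop where
  partialProdRep : ∀ w, 1 ≤ w → t ≤ w → PartialProdRep 𝒜 w
  commRep : ∀ i j, 1 ≤ i → 1 ≤ j → t ≤ i + j → CommRep 𝒜 i j
  conjRep : ∀ w i, 1 ≤ w → 1 ≤ i → t ≤ w + i → ConjRep 𝒜 w i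

theorem RepFrom.of_length_le {t : ℕ} (ht : 𝒜.length ≤ t) : RepFrom 𝒜 t := by
  have hcomm : ∀ i j, 1 ≤ i → 1 ≤ j → t ≤ i + j → CommRep 𝒜 i j := by
    intro i j hi hj hij d hd e he f g _ _
    refine ⟨[], by simp, by simp, fun n => ?_⟩
    have := 𝒜.antitone (ht.trans hij)
      (𝒜.commutator_mem hi hj (zpow_mem hd (f n)) (zpow_mem he (g n)))
    simp_all [𝒜.term_length]
  refine ⟨fun w hw htw L hL => ⟨[], by simp, by simp, fun n => ?_⟩, hcomm,
    fun w i hw hi hwi => conjRep_of_commRep hi fun v hv => hcomm v i (hw.trans hv) hi (by omega)⟩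
  simp [funext (evalProd_eq_one 𝒜 (ht.trans htw) hL)]

theorem RepFrom.pred {t : ℕ} (ht : 1 ≤ t) (h : RepFrom 𝒜 (t + 1)) : RepFrom 𝒜 t := by
  have hpp : ∀ w, 1 ≤ w → t ≤ w → PartialProdRep 𝒜 w := fun w hw htw => by
    rcases htw.eq_or_lt with rfl | htw
    · exact partialProdRep_of_conjRep (h.partialProdRep _ (by omega) le_rfl)
        (h.conjRep t t ht ht (by omega))
    · exact h.partialProdRep w hw htw
  have hcomm : ∀ i j, 1 ≤ i → 1 ≤ j → t ≤ i + j → CommRep 𝒜 i j := fun i j hi hj hij => by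
    rcases hij.eq_or_lt with rfl | hij
    · exact commRep_of_conjRep hi hj (hpp _ (by omega) le_rfl)
        (h.conjRep _ i (by omega) hi (by omega)) (h.conjRep _ j (by omega) hj (by omega))
    · exact h.commRep i j hi hj hij
  exact ⟨hpp, hcomm,
    fun w i hw hi hwi => conjRep_of_commRep hi fun v hv => hcomm v i (hw.trans hv) hi (by omega)⟩

theorem repFrom (t : ℕ) (ht : 1 ≤ t) : RepFrom 𝒜 t := by
  induction hk : 𝒜.length - t generalizing t with
  | zero => exact .of_length_le (by omega)
  | succ k ih => exact (ih (t + 1) (by omega) (by omega)).pred ht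

theorem exists_rep_pow_mul_pow {a b : H} (ha : a ∈ 𝒜.term 1) (hb : b ∈ 𝒜.term 1) :
    ∃ L : List (PolyPow H), (∀ m ∈ L, m.IsAdmissible 𝒜 2) ∧ (∀ m ∈ L, m.exponent 0 = 0) ∧
      ∀ n : ℕ, a ^ n * b ^ n = (a * b) ^ n * evalProd L n := by
  obtain ⟨hpp, hcomm, hconj⟩ := repFrom (𝒜 := 𝒜) 1 le_rfl
  obtain ⟨L₁, hL₁, -, hL₁eval⟩ := hcomm 1 1 le_rfl le_rfl (by omega) b hb (a * b)
    (mul_mem ha hb) (fun _ => 1) (fun n => -n) (.const 1) IsNumericalPoly.natCast.neg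
  obtain ⟨L₂, hL₂, -, -, hL₂eval⟩ := hconj 2 1 (by omega) le_rfl (by omega) b hb
    (fun n => n) IsNumericalPoly.natCast L₁ hL₁
  obtain ⟨L₃, hL₃, hL₃van, hL₃eval⟩ := hpp 2 (by omega) (by omega) L₂ hL₂
  obtain ⟨L₄, hL₄, -, hL₄van, hL₄eval⟩ := hconj 2 1 (by omega) le_rfl (by omega) b hb
    (fun n => -n) IsNumericalPoly.natCast.neg L₃ hL₃
  -- `bⁿ (ab)⁻ⁿ aⁿ` is the partial product of `bⁿ ⁅b, (ab)⁻ⁿ⁆ b⁻ⁿ`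
  have hG : ∀ n : ℕ, evalProd L₃ n = b ^ (n : ℤ) * (a * b) ^ (-(n : ℤ)) * a ^ (n : ℤ) := by
    intro n
    rw [hL₃eval, partialProd_eq_mul_partialProd_mul_inv
      (g := fun n : ℕ => b ^ (n : ℤ) * (a * b) ^ (-(n : ℤ)) * a ^ (n : ℤ)) (Y := fun _ => 1)
      (fun n => ?_) n]
    · simp
    · have hab : (a * b) ^ (-((n : ℤ) + 1)) = (a * b) ^ (-(n : ℤ)) * b⁻¹ * a⁻¹ := by
        rw [neg_add, zpow_add, zpow_neg_one, mul_inv_rev, mul_assoc]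
      simp only [hL₂eval, hL₁eval, commutatorElement_def, Nat.cast_succ, hab]
      group
  refine ⟨L₄, hL₄, hL₄van hL₃van, fun n => ?_⟩
  rw [hL₄eval, hG]
  simp only [← zpow_natCast]
  group

end Engine

variable (G : Type*) [Group G] in
def HallPetrescuBound (p E : ℕ) : Prop :=
  ∀ (a b : G) (D : Subgroup G), D.Normal → ⁅a, b⁆ ∈ D → ∀ N : ℕ,
    ∃ z ∈ Subgroup.agemo p (N - E) D, a ^ p ^ N * b ^ p ^ N = (a * b) ^ p ^ N * z

def lowerCentralNSeries {G : Type*} [Group G] {c : ℕ}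
    (hc : (⊤ : Subgroup G).lowerCentralSeries c = ⊥) : NSeries G where
  term i := (⊤ : Subgroup G).lowerCentralSeries (i - 1)
  antitone _ _ h := Subgroup.lowerCentralSeries_antitone _ (by omega)
  commutator_mem {i j} hi hj _ _ hx hy := by
    have := Subgroup.commutator_lowerCentralSeries_le (i - 1) (j - 1)
      (Subgroup.commutator_mem_commutator hx hy)
    rwa [show i - 1 + (j - 1) + 1 = i + j - 1 by omega] at this
  length := c + 1
  term_length := hc

abbrev FreeNilpotentGroup (α : Type*) (c : ℕ) :=
  FreeGroup α ⧸ (⊤ : Subgroup (FreeGroup α)).lowerCentralSeries c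

namespace FreeNilpotentGroup

variable {α : Type*} {c : ℕ}

def gen (i : α) : FreeNilpotentGroup α c :=
  QuotientGroup.mk (FreeGroup.of i)

theorem lowerCentralSeries_eq_bot :
    (⊤ : Subgroup (FreeNilpotentGroup α c)).lowerCentralSeries c = ⊥ := by
  rw [← Subgroup.map_lowerCentralSeries_of_surjective (QuotientGroup.mk'_surjective _),
    Subgroup.map_eq_bot_iff, QuotientGroup.ker_mk']

theorem closure_range_gen :
    Subgroup.closure (Set.range (gen : α → FreeNilpotentGroup α c)) = ⊤ := by
  have := congrArg
    (Subgroup.map <| QuotientGroup.mk' <| (⊤ : Subgroup (FreeGroup α)).lowerCentralSeries c)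
    (FreeGroup.closure_range_of α)
  rwa [MonoidHom.map_closure, ← Set.range_comp,
    Subgroup.map_top_of_surjective _ (QuotientGroup.mk'_surjective _)] at this

def lift {G : Type*} [Group G] (hG : (⊤ : Subgroup G).lowerCentralSeries c = ⊥) (f : α → G) :
    FreeNilpotentGroup α c →* G :=
  QuotientGroup.lift _ (FreeGroup.lift f) <| (Subgroup.map_eq_bot_iff _).1 <| by
    rw [Subgroup.map_lowerCentralSeries, eq_bot_iff, ← hG]
    exact Subgroup.lowerCentralSeries_mono c le_top

@[simp]
theorem lift_gen {G : Type*} [Group G] (hG : (⊤ : Subgroup G).lowerCentralSeries c = ⊥)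
    (f : α → G) (i : α) : lift hG f (gen i) = f i := by
  simp [lift, gen]

end FreeNilpotentGroup

theorem map_evalProd_prime_pow_mem_agemo {H G : Type*} [Group H] [Group G] (φ : H →* G)
    {D : Subgroup G} {p E : ℕ} (hp : p.Prime) {L : List (PolyPow H)}
    (hmem : ∀ m ∈ L, φ m.base ∈ D) (hdeg : ∀ m ∈ L, IsNumericalPolyLE E m.exponent)
    (hvan : ∀ m ∈ L, m.exponent 0 = 0) (N : ℕ) :
    φ (evalProd L (p ^ N)) ∈ Subgroup.agemo p (N - E) D := by
  induction L with
  | nil => simp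
  | cons m L ih =>
    simp only [List.forall_mem_cons] at hmem hdeg hvan
    obtain ⟨k, hk⟩ := hdeg.1.pow_sub_dvd_apply_prime_pow hp hvan.1 N
    rw [evalProd_cons, map_mul, map_zpow, hk, mul_comm, zpow_mul, ← Nat.cast_pow,
      zpow_natCast]
    exact mul_mem (Subgroup.pow_mem_agemo p _ (zpow_mem hmem.1 k)) (ih hmem.2 hdeg.2 hvan.2)

theorem exists_hallPetrescuBound (c : ℕ) {p : ℕ} (hp : p.Prime) :
    ∃ E, ∀ (G : Type*) [Group G], (⊤ : Subgroup G).lowerCentralSeries c = ⊥ →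
      HallPetrescuBound G p E := by
  let x : FreeNilpotentGroup (Fin 2) c := FreeNilpotentGroup.gen 0
  let y : FreeNilpotentGroup (Fin 2) c := FreeNilpotentGroup.gen 1
  obtain ⟨L, hL, hLvan, hLeval⟩ := exists_rep_pow_mul_pow
    (𝒜 := lowerCentralNSeries FreeNilpotentGroup.lowerCentralSeries_eq_bot)
    (Subgroup.mem_top x) (Subgroup.mem_top y)
  obtain ⟨E, hE⟩ := IsNumericalPoly.exists_isNumericalPolyLE (L.map (·.exponent))
    (by simpa using fun m hm => (hL m hm).isNumericalPoly)
  refine ⟨E, fun G _ hG a b D _ hab N => ?_⟩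
  let φ := FreeNilpotentGroup.lift hG ![a, b]
  -- the bases lie in the commutator subgroup, which `φ` maps into `D ∋ ⁅a, b⁆`
  have hUD : commutator (FreeNilpotentGroup (Fin 2) c) ≤ D.comap φ := by
    refine Subgroup.commutator_le_of_closure_eq_top FreeNilpotentGroup.closure_range_gen ?_
    rintro _ ⟨i, rfl⟩ _ ⟨j, rfl⟩
    rw [Subgroup.mem_comap, map_commutatorElement, FreeNilpotentGroup.lift_gen,
      FreeNilpotentGroup.lift_gen]
    have hba : ⁅b, a⁆ ∈ D := by rw [← commutatorElement_inv]; exact inv_mem hab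
    fin_cases i <;> fin_cases j <;> simp [hab, hba]
  have hmem : ∀ m ∈ L, φ m.base ∈ D := fun m hm => by
    have h1 : 1 ≤ m.weight - 1 := by have := (hL m hm).le_weight; omega
    exact hUD (Subgroup.lowerCentralSeries_antitone _ h1 (hL m hm).base_mem)
  refine ⟨φ (evalProd L (p ^ N)), map_evalProd_prime_pow_mem_agemo φ hp hmem
    (by simpa using hE) hLvan N, ?_⟩
  simpa [φ, x, y] using congrArg φ (hLeval (p ^ N))

section Roots

variable {G : Type*} [Group G] {p E : ℕ}

def AgemoRoots (p : ℕ) (K : Subgroup G) : Prop :=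
  ∀ m, ∃ n, ∀ (β : G), ∀ z ∈ Subgroup.agemo p n K,
    ∃ y ∈ Subgroup.closure {β} ⊔ K, y ^ p ^ m = β ^ p ^ n * z

theorem agemoRoots_bot (p : ℕ) : AgemoRoots p (⊥ : Subgroup G) := fun m =>
  ⟨m, fun β z hz => ⟨β, Subgroup.mem_sup_left (Subgroup.mem_closure_singleton_self β), by
    simp_all⟩⟩

theorem commutator_mem_lowerCentralSeries_succ {l : ℕ} {x : G}
    (hx : x ∈ (⊤ : Subgroup G).lowerCentralSeries l) (y : G) :
    ⁅x, y⁆ ∈ (⊤ : Subgroup G).lowerCentralSeries (l + 1) :=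
  Subgroup.commutator_mem_commutator hx (Subgroup.mem_top y)

theorem exists_eq_pow_mul_of_mem_agemo (hHP : HallPetrescuBound G p E) {l n : ℕ} {x : G}
    (hx : x ∈ Subgroup.agemo p n ((⊤ : Subgroup G).lowerCentralSeries l)) :
    ∃ h ∈ (⊤ : Subgroup G).lowerCentralSeries l,
      ∃ z ∈ Subgroup.agemo p (n - E) ((⊤ : Subgroup G).lowerCentralSeries (l + 1)),
        x = h ^ p ^ n * z := by
  have hnormal := Subgroup.agemo_normal p (n - E) ((⊤ : Subgroup G).lowerCentralSeries (l + 1))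
  induction hx using Subgroup.closure_induction with
  | mem _ hy =>
    obtain ⟨d, hd, rfl⟩ := hy
    exact ⟨d, hd, 1, one_mem _, (mul_one _).symm⟩
  | one => exact ⟨1, one_mem _, 1, one_mem _, by simp⟩
  | mul _ _ _ _ ih₁ ih₂ =>
    obtain ⟨h₁, hh₁, z₁, hz₁, rfl⟩ := ih₁
    obtain ⟨h₂, hh₂, z₂, hz₂, rfl⟩ := ih₂
    obtain ⟨z, hz, hmerge⟩ := hHP h₁ h₂ _ inferInstance
      (commutator_mem_lowerCentralSeries_succ hh₁ h₂) n
    refine ⟨h₁ * h₂, mul_mem hh₁ hh₂, z * ((h₂ ^ p ^ n)⁻¹ * z₁ * h₂ ^ p ^ n) * z₂,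
      mul_mem (mul_mem hz (hnormal.conj_mem' z₁ hz₁ _)) hz₂, ?_⟩
    rw [show h₁ ^ p ^ n * z₁ * (h₂ ^ p ^ n * z₂) =
      h₁ ^ p ^ n * h₂ ^ p ^ n * ((h₂ ^ p ^ n)⁻¹ * z₁ * h₂ ^ p ^ n) * z₂ by group, hmerge]
    group
  | inv _ _ ih =>
    obtain ⟨h, hh, z, hz, rfl⟩ := ih
    refine ⟨h⁻¹, inv_mem hh, h ^ p ^ n * z⁻¹ * (h ^ p ^ n)⁻¹,
      hnormal.conj_mem _ (inv_mem hz) _, ?_⟩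
    rw [inv_pow]
    group

theorem exists_pow_eq_of_mem_agemo (hHP : HallPetrescuBound G p E) {l : ℕ}
    (hroots : AgemoRoots p ((⊤ : Subgroup G).lowerCentralSeries (l + 1))) (m : ℕ) :
    ∃ n, ∀ x ∈ Subgroup.agemo p n ((⊤ : Subgroup G).lowerCentralSeries l),
      ∃ y ∈ (⊤ : Subgroup G).lowerCentralSeries l, y ^ p ^ m = x := by
  obtain ⟨n, hn⟩ := hroots m
  refine ⟨n + E, fun x hx => ?_⟩
  obtain ⟨h, hh, z, hz, rfl⟩ := exists_eq_pow_mul_of_mem_agemo hHP hx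
  rw [Nat.add_sub_cancel] at hz
  obtain ⟨y, hy, hyz⟩ := hn (h ^ p ^ E) z hz
  refine ⟨y, sup_le ?_ (Subgroup.lowerCentralSeries_antitone _ l.le_succ) hy, ?_⟩
  · rw [Subgroup.closure_le, Set.singleton_subset_iff]
    exact pow_mem hh _
  · rw [hyz, ← pow_mul, ← pow_add, add_comm]

theorem AgemoRoots.of_lowerCentralSeries_succ (hHP : HallPetrescuBound G p E) {l : ℕ}
    (hroots : AgemoRoots p ((⊤ : Subgroup G).lowerCentralSeries (l + 1))) :
    AgemoRoots p ((⊤ : Subgroup G).lowerCentralSeries l) := by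
  intro m
  obtain ⟨n, hn⟩ := hroots m
  obtain ⟨n', hn'⟩ := exists_pow_eq_of_mem_agemo hHP hroots (n + E)
  refine ⟨n' + (n + E), fun β z hz => ?_⟩
  -- `z = γ ^ p ^ (n + E)`; merging the `p ^ (n + E)`-th powers of `β ^ p ^ n'` and `γ` costs a
  -- factor in `℧ₙ` of the next term, which the induction hypothesis absorbs
  obtain ⟨γ, hγ, rfl⟩ := hn' z (Subgroup.agemo_antitone p (Nat.le_add_right n' (n + E)) _ hz)
  have hβγ : ⁅β ^ p ^ n', γ⁆ ∈ (⊤ : Subgroup G).lowerCentralSeries (l + 1) := by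
    rw [← commutatorElement_inv]
    exact inv_mem (commutator_mem_lowerCentralSeries_succ hγ _)
  obtain ⟨z', hz', hmerge⟩ := hHP (β ^ p ^ n') γ _ inferInstance hβγ (n + E)
  rw [Nat.add_sub_cancel] at hz'
  obtain ⟨y, hy, hyz⟩ := hn ((β ^ p ^ n' * γ) ^ p ^ E) z' hz'
  refine ⟨y, sup_le ?_ (Subgroup.lowerCentralSeries_antitone _ l.le_succ |>.trans le_sup_right) hy,
    ?_⟩
  · rw [Subgroup.closure_le, Set.singleton_subset_iff]
    have hβ : β ^ p ^ n' ∈ Subgroup.closure {β} :=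
      pow_mem (Subgroup.mem_closure_singleton_self β) _
    exact pow_mem (mul_mem (Subgroup.mem_sup_left hβ) (Subgroup.mem_sup_right hγ)) _
  · rw [hyz, ← pow_mul, ← pow_add, add_comm E, ← hmerge, ← pow_mul, ← pow_add]

theorem agemoRoots_lowerCentralSeries (hHP : HallPetrescuBound G p E) {c : ℕ}
    (hc : (⊤ : Subgroup G).lowerCentralSeries c = ⊥) (l : ℕ) :
    AgemoRoots p ((⊤ : Subgroup G).lowerCentralSeries l) := by
  induction hk : c - l generalizing l with
  | zero =>
    have hl : (⊤ : Subgroup G).lowerCentralSeries l = ⊥ :=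
      eq_bot_iff.2 (hc ▸ Subgroup.lowerCentralSeries_antitone _ (by omega))
    exact hl ▸ agemoRoots_bot p
  | succ k ih => exact .of_lowerCentralSeries_succ hHP (ih (l + 1) (by omega))

end Roots

theorem stmt4_general {G : Type*} [Group G] [Group.IsNilpotent G] (p : ℕ) (hp : p.Prime)
    (N : Subgroup G) [N.Normal]
    (hN : ↑N = {g : G | ∀ n : ℕ, ∃ h : G, h ^ (p ^ n) = g}) :
    ∀ x : G ⧸ N, (∀ n : ℕ, ∃ h : G ⧸ N, h ^ (p ^ n) = x) → x = 1 := by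
  obtain ⟨c, hc⟩ := Subgroup.nilpotent_iff_lowerCentralSeries.1 ‹Group.IsNilpotent G›
  obtain ⟨E, hE⟩ := exists_hallPetrescuBound c hp
  have hHP := hE G hc
  intro x hx
  obtain ⟨x, rfl⟩ := QuotientGroup.mk_surjective x
  have hx_mem : ∀ n, x ∈ Subgroup.agemo p n (⊤ : Subgroup G) := fun n => by
    obtain ⟨h, hh⟩ := hx n
    obtain ⟨h, rfl⟩ := QuotientGroup.mk_surjective h
    have hmem : (h ^ p ^ n)⁻¹ * x ∈ N := QuotientGroup.eq.1 hh
    rw [← SetLike.mem_coe, hN] at hmem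
    obtain ⟨w, hw⟩ := hmem n
    rw [show x = h ^ p ^ n * ((h ^ p ^ n)⁻¹ * x) by group, ← hw]
    exact mul_mem (Subgroup.pow_mem_agemo p n (Subgroup.mem_top h))
      (Subgroup.pow_mem_agemo p n (Subgroup.mem_top w))
  rw [QuotientGroup.eq_one_iff, ← SetLike.mem_coe, hN]
  intro m
  obtain ⟨n, hn⟩ := exists_pow_eq_of_mem_agemo hHP (agemoRoots_lowerCentralSeries hHP hc 1) m
  obtain ⟨y, -, hy⟩ := hn x (hx_mem n)
  exact ⟨y, hy⟩

/-- In a nilpotent `p`-group `G`, the quotient by the subgroup `G₀` of elements of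
infinite `p`-height has no nontrivial elements of infinite `p`-height. -/
theorem stmt4 {G : Type*} [Group G] [Group.IsNilpotent G] (p : ℕ) (hp : p.Prime)
    (hpG : IsPGroup p G) (N : Subgroup G) [N.Normal]
    (hN : ↑N = {g : G | ∀ n : ℕ, ∃ h : G, h ^ (p ^ n) = g}) :
    ∀ x : G ⧸ N, (∀ n : ℕ, ∃ h : G ⧸ N, h ^ (p ^ n) = x) → x = 1 :=
  stmt4_general p hp N hN
end

section
/- Let G be a nilpotent p-group whose first Ulm factor G/G₀ has bounded period (i.e., there exists l with x^(p^l) = 1 for all x ∈ G/G₀). Then the subgroup G₀ of elements of infinite p-height is divisible. -/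
/-!
Every element of `G₀` has a `p^(l+1)`-th root `y` in `G`, and `y ^ p ^ l` lies in `G₀` because
`G/G₀` has exponent dividing `p ^ l`; so `G₀` has `p`-th roots, hence `p ^ k`-th roots, inside itself.
Roots of order prime to `p` exist in any `p`-group, since the power map is then bijective.
-/

namespace Subgroup

variable {G : Type*} [Group G]

def HasRoots (N : Subgroup G) (n : ℕ) : Prop :=
  ∀ g ∈ N, ∃ h ∈ N, h ^ n = g

variable {N : Subgroup G}

theorem HasRoots.mul {m n : ℕ} (hm : N.HasRoots m) (hn : N.HasRoots n) : N.HasRoots (m * n) := by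
  intro g hg
  obtain ⟨y, hy, rfl⟩ := hn g hg
  obtain ⟨z, hz, rfl⟩ := hm y hy
  exact ⟨z, hz, pow_mul z m n⟩

theorem HasRoots.pow {n : ℕ} (hn : N.HasRoots n) (k : ℕ) : N.HasRoots (n ^ k) := by
  induction k with
  | zero => exact fun g hg => ⟨g, hg, pow_one g⟩
  | succ k ih => simpa only [pow_succ] using ih.mul hn

theorem hasRoots_of_isPGroup {p n : ℕ} (hG : IsPGroup p G) (hn : p.Coprime n) :
    N.HasRoots n := fun g hg =>
  let e := (hG.to_subgroup N).powEquiv hn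
  ⟨e.symm ⟨g, hg⟩, (e.symm ⟨g, hg⟩).2, congrArg Subtype.val (e.apply_symm_apply ⟨g, hg⟩)⟩

theorem pow_mem_of_forall_pow_eq_one [N.Normal] {e : ℕ} (he : ∀ x : G ⧸ N, x ^ e = 1) (x : G) :
    x ^ e ∈ N := by
  rw [← QuotientGroup.eq_one_iff, QuotientGroup.mk_pow]
  exact he x

theorem hasRoots_of_forall_pow_eq_one [N.Normal] {n e : ℕ} (he : ∀ x : G ⧸ N, x ^ e = 1)
    (hroot : ∀ g ∈ N, ∃ y : G, y ^ (e * n) = g) : N.HasRoots n := fun g hg =>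
  let ⟨y, hy⟩ := hroot g hg
  ⟨y ^ e, pow_mem_of_forall_pow_eq_one he y, by rw [← pow_mul, hy]⟩

end Subgroup

theorem stmt5_general {G : Type*} [Group G] (p : ℕ) (hp : p.Prime)
    (hpG : IsPGroup p G) (N : Subgroup G) [N.Normal]
    (hN : ↑N = {g : G | ∀ n : ℕ, ∃ h : G, h ^ (p ^ n) = g})
    (hbdd : ∃ l : ℕ, ∀ x : G ⧸ N, x ^ (p ^ l) = 1) :
    ∀ g ∈ N, ∀ n : ℕ, 0 < n → ∃ h ∈ N, h ^ n = g := by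
  obtain ⟨l, hl⟩ := hbdd
  have hroot_p : N.HasRoots p := Subgroup.hasRoots_of_forall_pow_eq_one hl fun g hg => by
    rw [← pow_succ]
    exact (Set.ext_iff.mp hN g).mp hg (l + 1)
  intro g hg n hn
  have hcop : p.Coprime (ordCompl[p] n) := Nat.coprime_ordCompl hp hn.ne'
  have hroot_n : N.HasRoots n := by
    simpa only [Nat.ordProj_mul_ordCompl_eq_self] using
      (hroot_p.pow (n.factorization p)).mul (Subgroup.hasRoots_of_isPGroup hpG hcop)
  exact hroot_n g hg

/-- If `G` is a nilpotent `p`-group whose first Ulm factor `G/G₀` has bounded period,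
then the subgroup `G₀` of elements of infinite `p`-height is divisible. -/
theorem stmt5 {G : Type*} [Group G] [Group.IsNilpotent G] (p : ℕ) (hp : p.Prime)
    (hpG : IsPGroup p G) (N : Subgroup G) [N.Normal]
    (hN : ↑N = {g : G | ∀ n : ℕ, ∃ h : G, h ^ (p ^ n) = g})
    (hbdd : ∃ l : ℕ, ∀ x : G ⧸ N, x ^ (p ^ l) = 1) :
    ∀ g ∈ N, ∀ n : ℕ, 0 < n → ∃ h ∈ N, h ^ n = g :=
  stmt5_general p hp hpG N hN hbdd
end

section
/- Let A be a reduced abelian p-group of unbounded period with no nontrivial elements of infinite height. Then for every natural number r there is a decomposition A = ⟨a⟩ ⊕ B where ⟨a⟩ is a cyclic direct summand of order greater than r. -/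
/-!
Take `c` of order `p ^ (n + 1) > p ^ r` and put `a = p ^ n • c`, an element of order `p`.
Since `A` has no elements of infinite height, `a` has an exact height `h ≥ n`; write
`a = p ^ h • b`. Then `b` has order `p ^ (h + 1)`, and `⟨b⟩` meets `p ^ (h + 1) A` trivially
because `a` is not in `p ^ (h + 1) A`. Let `B ⊇ p ^ (h + 1) A` be maximal with `⟨b⟩ ∩ B = 0`.
By induction on the order of `x`, every `x` lies in `⟨b⟩ + B`: if `p x = m b + e` with `p ∣ m`,
then maximality of `B` puts `x - (m / p) b` into `⟨b⟩ + B`; if `p ∤ m`, then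
`m a = p ^ (h + 1) x - p ^ h e ∈ B`, which forces `a ∈ ⟨b⟩ ∩ B`.
Below, `p ^ k A` is written `p ^ k • (⊤ : AddSubgroup A)`.
-/

def AddSubgroup.IsDivisible {A : Type*} [AddCommGroup A] (D : AddSubgroup A) : Prop :=
  ∀ d ∈ D, ∀ n : ℕ, 0 < n → ∃ x ∈ D, n • x = d

open Pointwise AddSubgroup

section

variable {A : Type*} [AddCommGroup A] {p : ℕ}

theorem AddSubgroup.exists_le_maximal_disjoint {C P : AddSubgroup A} (h : Disjoint C P) :
    ∃ B, P ≤ B ∧ Maximal (Disjoint C) B := by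
  refine zorn_le_nonempty₀ {B | Disjoint C B} (fun c hc hchain B hB => ?_) P h
  refine ⟨sSup c, disjoint_def.2 fun hxC hxc => ?_, fun B' hB' => le_sSup hB'⟩
  obtain ⟨B', hB'c, hxB'⟩ := (mem_sSup_of_directedOn ⟨B, hB⟩ hchain.directedOn).1 hxc
  exact disjoint_def.1 (hc hB'c) hxC hxB'

theorem AddSubgroup.mem_of_zsmul_mem_of_not_dvd (hp : p.Prime) {S : AddSubgroup A} {y : A}
    {K : ℕ} {t : ℤ} (hy : p ^ K • y = 0) (ht : ¬ (p : ℤ) ∣ t) (hty : t • y ∈ S) : y ∈ S := by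
  have hcop : Nat.Coprime t.natAbs (addOrderOf y) :=
    (((hp.coprime_iff_not_dvd.2 (Int.natCast_dvd.not.1 ht)).symm.pow_right K)).coprime_dvd_right
      (addOrderOf_dvd_of_nsmul_eq_zero hy)
  exact zmultiples_le.2 hty (mem_zmultiples_zsmul_iff.2 hcop)

theorem pow_smul_top_antitone (p : ℕ) :
    Antitone fun n : ℕ => p ^ n • (⊤ : AddSubgroup A) := by
  intro i j hij x hx
  obtain ⟨y, -, rfl⟩ := (mem_smul_pointwise_iff_exists _ _ _).1 hx
  refine (mem_smul_pointwise_iff_exists _ _ _).2 ⟨p ^ (j - i) • y, trivial, ?_⟩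
  rw [smul_smul, ← pow_add, Nat.add_sub_cancel' hij]

theorem exists_le_mem_pow_smul_top_notMem_succ {a : A} {k : ℕ}
    (hk : a ∈ p ^ k • (⊤ : AddSubgroup A)) (hfin : ¬ ∀ n : ℕ, a ∈ p ^ n • (⊤ : AddSubgroup A)) :
    ∃ h, k ≤ h ∧ a ∈ p ^ h • (⊤ : AddSubgroup A) ∧ a ∉ p ^ (h + 1) • (⊤ : AddSubgroup A) := by
  by_contra! hstep
  refine hfin fun n => pow_smul_top_antitone p (le_max_left n k) ?_
  induction max n k, le_max_right n k using Nat.le_induction with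
  | base => exact hk
  | succ m hkm ih => exact hstep m hkm ih

theorem exists_ne_zero_nsmul_eq_zero_mem_pow_smul_top (hp : p.Prime) {c : A} {K r : ℕ}
    (hc : p ^ K • c = 0) (hr : p ^ r < addOrderOf c) :
    ∃ a ≠ 0, p • a = 0 ∧ a ∈ p ^ r • (⊤ : AddSubgroup A) := by
  obtain ⟨i, -, hci⟩ := (Nat.dvd_prime_pow hp).1 (addOrderOf_dvd_of_nsmul_eq_zero hc)
  rw [hci, Nat.pow_lt_pow_iff_right hp.one_lt] at hr
  obtain ⟨j, rfl⟩ : ∃ j, i = r + j + 1 := ⟨i - r - 1, by omega⟩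
  refine ⟨p ^ (r + j) • c, nsmul_ne_zero_of_lt_addOrderOf (pow_ne_zero _ hp.ne_zero) ?_, ?_, ?_⟩
  · rw [hci]
    exact Nat.pow_lt_pow_right hp.one_lt (by omega)
  · rw [smul_smul, ← pow_succ', ← hci, addOrderOf_nsmul_eq_zero]
  · rw [pow_add, mul_smul]
    exact (mem_smul_pointwise_iff_exists _ _ _).2 ⟨_, trivial, rfl⟩

theorem disjoint_zmultiples_pow_smul_top (hp : p.Prime) {b : A} {h : ℕ}
    (hb : p ^ (h + 1) • b = 0) (hbh : p ^ h • b ∉ p ^ (h + 1) • (⊤ : AddSubgroup A)) :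
    Disjoint (zmultiples b) (p ^ (h + 1) • (⊤ : AddSubgroup A)) := by
  refine disjoint_def.2 fun {x} hxb hx => ?_
  have hfin : IsOfFinAddOrder b := isOfFinAddOrder_iff_nsmul_eq_zero.2 ⟨_, pow_pos hp.pos _, hb⟩
  obtain ⟨n, rfl⟩ :=
    (AddSubmonoid.mem_multiples_iff _ _).1 (hfin.mem_multiples_iff_mem_zmultiples.2 hxb)
  by_contra hx0
  obtain ⟨j, u, hu, rfl⟩ := Nat.exists_eq_pow_mul_and_not_dvd (n := n)
    (by rintro rfl; exact hx0 (zero_smul _ _)) p hp.ne_one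
  have hjh : j ≤ h := by
    by_contra! hhj
    refine hx0 ?_
    rw [← Nat.add_sub_cancel' hhj, pow_add, mul_assoc, mul_comm, mul_smul, hb, smul_zero]
  refine hbh (mem_of_zsmul_mem_of_not_dvd hp (K := 1) (t := u) ?_
    (Int.natCast_dvd_natCast.not.2 hu) ?_)
  · rw [pow_one, smul_smul, ← pow_succ', hb]
  · have : p ^ (h - j) • ((p ^ j * u) • b) = (u : ℤ) • (p ^ h • b) := by
      rw [natCast_zsmul, smul_smul, smul_smul, ← mul_assoc, ← pow_add, Nat.sub_add_cancel hjh,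
        mul_comm]
    exact this ▸ nsmul_mem hx _

theorem mem_sup_of_nsmul_mem_of_maximal_disjoint (hp : p.Prime) {C B : AddSubgroup A}
    (hB : Maximal (Disjoint C) B) {y : A} {K : ℕ} (hy : p ^ K • y = 0) (hpy : p • y ∈ B) :
    y ∈ C ⊔ B := by
  by_cases hyB : y ∈ B
  · exact mem_sup_right hyB
  have hmeet : ¬ Disjoint C (B ⊔ zmultiples y) := fun hd =>
    hyB (hB.2 hd le_sup_left (mem_sup_right (mem_zmultiples y)))
  obtain ⟨w, hwC, hwBy, hw0⟩ : ∃ w ∈ C, w ∈ B ⊔ zmultiples y ∧ w ≠ 0 := by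
    simpa [disjoint_def] using hmeet
  obtain ⟨e, he, _, ⟨t, rfl⟩, rfl⟩ := mem_sup.1 hwBy
  by_cases hpt : (p : ℤ) ∣ t
  · obtain ⟨t', rfl⟩ := hpt
    have hty : ((p : ℤ) * t') • y ∈ B := by
      rw [mul_comm, mul_smul, natCast_zsmul]
      exact zsmul_mem hpy t'
    exact absurd (disjoint_def.1 hB.1 hwC (add_mem he hty)) hw0
  · refine mem_of_zsmul_mem_of_not_dvd hp hy hpt ?_
    rw [← add_sub_cancel_left e (t • y)]
    exact sub_mem (mem_sup_left hwC) (mem_sup_right he)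

theorem mem_zmultiples_sup_of_nsmul_mem (hp : p.Prime) (hpA : ∀ a : A, ∃ n : ℕ, p ^ n • a = 0)
    {b : A} {h : ℕ} (hb : p ^ (h + 1) • b = 0) (hbh : p ^ h • b ≠ 0) {B : AddSubgroup A}
    (hB : Maximal (Disjoint (zmultiples b)) B) (hPB : p ^ (h + 1) • (⊤ : AddSubgroup A) ≤ B)
    {x : A} (hx : p • x ∈ zmultiples b ⊔ B) : x ∈ zmultiples b ⊔ B := by
  obtain ⟨_, ⟨m, rfl⟩, e, he, hsum⟩ := mem_sup.1 hx
  by_cases hpm : (p : ℤ) ∣ m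
  · obtain ⟨m', rfl⟩ := hpm
    have hy : p • (x - m' • b) = e := by
      rw [smul_sub, ← hsum, ← natCast_zsmul _ p, smul_smul]
      abel
    obtain ⟨K, hK⟩ := hpA (x - m' • b)
    have := add_mem (mem_sup_of_nsmul_mem_of_maximal_disjoint hp hB hK (hy ▸ he))
      (mem_sup_left (zsmul_mem (mem_zmultiples b) m'))
    rwa [sub_add_cancel] at this
  · refine absurd (disjoint_def.1 hB.1 (nsmul_mem (mem_zmultiples b) _) ?_) hbh
    refine mem_of_zsmul_mem_of_not_dvd hp (K := 1) ?_ hpm ?_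
    · rw [pow_one, smul_smul, ← pow_succ', hb]
    · have : m • p ^ h • b = p ^ (h + 1) • x - p ^ h • e := by
        rw [smul_comm, eq_sub_iff_add_eq, ← smul_add, hsum, pow_succ, mul_smul]
      rw [this]
      exact sub_mem (hPB ((mem_smul_pointwise_iff_exists _ _ _).2 ⟨x, trivial, rfl⟩))
        (nsmul_mem he _)

theorem exists_isCompl_zmultiples (hp : p.Prime) (hpA : ∀ a : A, ∃ n : ℕ, p ^ n • a = 0)
    {b : A} {h : ℕ} (hb : p ^ (h + 1) • b = 0)
    (hbh : p ^ h • b ∉ p ^ (h + 1) • (⊤ : AddSubgroup A)) :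
    ∃ B, IsCompl (zmultiples b) B := by
  obtain ⟨B, hPB, hB⟩ := exists_le_maximal_disjoint (disjoint_zmultiples_pow_smul_top hp hb hbh)
  have hbh0 : p ^ h • b ≠ 0 := fun h0 => hbh (h0 ▸ zero_mem _)
  refine ⟨B, hB.1, codisjoint_iff.2 ((eq_top_iff' _).2 fun x => ?_)⟩
  obtain ⟨K, hK⟩ := hpA x
  induction K generalizing x with
  | zero =>
    rw [pow_zero, one_smul] at hK
    exact hK ▸ zero_mem _
  | succ K ih =>
    refine mem_zmultiples_sup_of_nsmul_mem hp hpA hb hbh0 hB hPB (ih _ ?_)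
    rwa [smul_smul, ← pow_succ]

end

theorem stmt8_general {A : Type*} [AddCommGroup A] (p : ℕ) (hp : p.Prime)
    (hpA : ∀ a : A, ∃ n : ℕ, p ^ n • a = 0)
    (hsep : ∀ a : A, a ≠ 0 → ¬ (∀ n : ℕ, ∃ b : A, p ^ n • b = a))
    (hunbdd : ∀ n : ℕ, ∃ a : A, n < addOrderOf a) :
    ∀ r : ℕ, ∃ (a : A) (B : AddSubgroup A),
      IsCompl (AddSubgroup.zmultiples a) B ∧ r < addOrderOf a := by
  intro r
  obtain ⟨c, hc⟩ := hunbdd (p ^ r)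
  obtain ⟨K, hK⟩ := hpA c
  obtain ⟨a, ha0, hpa, har⟩ := exists_ne_zero_nsmul_eq_zero_mem_pow_smul_top hp hK hc
  obtain ⟨h, hrh, hah, hah1⟩ := exists_le_mem_pow_smul_top_notMem_succ har fun hinf =>
    hsep a ha0 fun n => by simpa [mem_smul_pointwise_iff_exists] using hinf n
  obtain ⟨b, -, rfl⟩ := (mem_smul_pointwise_iff_exists _ _ _).1 hah
  have hb : p ^ (h + 1) • b = 0 := by rw [pow_succ', mul_smul, hpa]
  obtain ⟨B, hB⟩ := exists_isCompl_zmultiples hp hpA hb hah1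
  have : Fact p.Prime := ⟨hp⟩
  refine ⟨b, B, hB, ?_⟩
  rw [addOrderOf_eq_prime_pow ha0 hb]
  exact (Nat.lt_pow_self hp.one_lt).trans_le' (by omega)

/-- A reduced abelian `p`-group of unbounded period with no nontrivial elements of
infinite height has cyclic direct summands of arbitrarily large order. -/
theorem stmt8 {A : Type*} [AddCommGroup A] (p : ℕ) (hp : p.Prime)
    (hpA : ∀ a : A, ∃ n : ℕ, p ^ n • a = 0)
    (hred : ∀ D : AddSubgroup A, D.IsDivisible → D = ⊥)
    (hsep : ∀ a : A, a ≠ 0 → ¬ (∀ n : ℕ, ∃ b : A, p ^ n • b = a))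
    (hunbdd : ∀ n : ℕ, ∃ a : A, n < addOrderOf a) :
    ∀ r : ℕ, ∃ (a : A) (B : AddSubgroup A),
      IsCompl (AddSubgroup.zmultiples a) B ∧ r < addOrderOf a :=
  stmt8_general p hp hpA hsep hunbdd
end

section
/- In a nilpotent torsion-free group G, the subgroup generated by any family of divisible subgroups is divisible; consequently G possesses a largest divisible subgroup H containing all divisible subgroups of G. -/
/-!
Mal'cev's power theorem: if the lower central series reaches `⊥` at step `c`, every element of the
subgroup generated by the `n ^ c`-th powers is an `n`-th power. Induct on `c` through `K`, the
subgroup generated by the `n`-th powers: a product of `n ^ (c + 1)`-th powers is a product of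
`n ^ c`-th powers of elements of `K`, hence of the form `y ^ n * u` with `u` in the `c`-th term of
the lower central series of `K`. Since commutators are multiplicative in each variable modulo the
next term (P. Hall), that term lies in the subgroup generated by `n ^ (c + 1)`-th powers of elements
of the central subgroup `γ_c(G)`, so `u = l ^ n ^ (c + 1)` with `l` central, and the element is
`(y * l ^ n ^ c) ^ n`.

Applied to `⨆ i, D i` with `c` its nilpotency class, divisibility of the `D i` makes every element
of `⨆ i, D i` a product of `n ^ c`-th powers of its own elements.
-/

open scoped commutatorElement

section Commutator

variable {G : Type*} [Group G]

theorem commutatorElement_pow_left_of_commute {a b : G} (h : Commute ⁅a, b⁆ a) (s : ℕ) :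
    ⁅a ^ s, b⁆ = ⁅a, b⁆ ^ s := by
  induction s with
  | zero => simp
  | succ s ih =>
    calc ⁅a ^ (s + 1), b⁆ = a * ⁅a ^ s, b⁆ * a⁻¹ * ⁅a, b⁆ := by
          simp only [pow_succ', commutatorElement_def]; group
      _ = ⁅a, b⁆ ^ (s + 1) := by rw [ih, (h.pow_left s).symm.mul_inv_cancel, pow_succ]

theorem commutatorElement_pow_right_of_commute {a b : G} (h : Commute ⁅a, b⁆ b) (t : ℕ) :
    ⁅a, b ^ t⁆ = ⁅a, b⁆ ^ t := by
  have h' : Commute ⁅b, a⁆ b := by rw [← commutatorElement_inv]; exact h.inv_left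
  rw [← commutatorElement_inv, commutatorElement_pow_left_of_commute h', ← commutatorElement_inv,
    inv_pow, inv_inv]

theorem commutatorElement_pow_pow_of_commute {a b : G} (ha : Commute ⁅a, b⁆ a)
    (hb : Commute ⁅a, b⁆ b) (s t : ℕ) : ⁅a ^ s, b ^ t⁆ = ⁅a, b⁆ ^ (s * t) := by
  have hb' : Commute ⁅a ^ s, b⁆ b := by
    rw [commutatorElement_pow_left_of_commute ha]; exact hb.pow_left s
  rw [commutatorElement_pow_right_of_commute hb', commutatorElement_pow_left_of_commute ha, pow_mul]

end Commutator

namespace Subgroup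

variable {G : Type*} [Group G]

theorem commutator_closure_le {S T : Set G} {L : Subgroup G} [L.Normal]
    (h : ∀ s ∈ S, ∀ t ∈ T, ⁅s, t⁆ ∈ L) : ⁅closure S, closure T⁆ ≤ L := by
  rw [← QuotientGroup.ker_mk' L, ← map_eq_bot_iff, map_commutator, MonoidHom.map_closure,
    MonoidHom.map_closure, commutator_eq_bot_iff_le_centralizer, centralizer_closure, closure_le]
  rintro _ ⟨s, hs, rfl⟩
  rw [SetLike.mem_coe, mem_centralizer_iff]
  rintro _ ⟨t, ht, rfl⟩
  have hst : QuotientGroup.mk' L ⁅s, t⁆ = 1 := (QuotientGroup.eq_one_iff _).mpr (h s hs t ht)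
  rw [map_commutatorElement, commutatorElement_eq_one_iff_commute] at hst
  exact hst.eq.symm

theorem commutatorElement_pow_pow_mul_inv_mem {j : ℕ} {a : G}
    (ha : a ∈ (⊤ : Subgroup G).lowerCentralSeries j) (g : G) (s t : ℕ) :
    ⁅a ^ s, g ^ t⁆ * (⁅a, g⁆ ^ (s * t))⁻¹ ∈ (⊤ : Subgroup G).lowerCentralSeries (j + 2) := by
  set π := QuotientGroup.mk' ((⊤ : Subgroup G).lowerCentralSeries (j + 2))
  have hcentral : ∀ x, Commute (π ⁅a, g⁆) (π x) := fun x => by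
    rw [← commutatorElement_eq_one_iff_commute, ← map_commutatorElement, QuotientGroup.mk'_apply,
      QuotientGroup.eq_one_iff]
    exact commutator_mem_commutator (commutator_mem_commutator ha (mem_top g)) (mem_top x)
  rw [← QuotientGroup.eq_one_iff, ← QuotientGroup.mk'_apply, map_mul, map_inv, mul_inv_eq_one,
    map_pow, map_commutatorElement, map_pow, map_pow, map_commutatorElement]
  exact commutatorElement_pow_pow_of_commute (hcentral a) (hcentral g) s t

def powClosure (A : Subgroup G) (m : ℕ) : Subgroup G :=
  closure ((· ^ m) '' (A : Set G))

theorem pow_mem_powClosure {A : Subgroup G} {a : G} (ha : a ∈ A) (m : ℕ) :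
    a ^ m ∈ A.powClosure m :=
  subset_closure ⟨a, ha, rfl⟩

theorem powClosure_mono (m : ℕ) : Monotone fun A : Subgroup G => A.powClosure m :=
  fun _ _ h => closure_mono (Set.image_mono h)

theorem map_powClosure {H : Type*} [Group H] (f : G →* H) (A : Subgroup G) (m : ℕ) :
    (A.powClosure m).map f = (A.map f).powClosure m := by
  simp only [powClosure, MonoidHom.map_closure, coe_map, Set.image_image, map_pow]

theorem map_subtype_top_powClosure (K : Subgroup G) (m : ℕ) :
    ((⊤ : Subgroup K).powClosure m).map K.subtype = K.powClosure m := by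
  rw [map_powClosure, ← MonoidHom.range_eq_map, range_subtype]

instance powClosure_characteristic (A : Subgroup G) [hA : A.Characteristic] (m : ℕ) :
    (A.powClosure m).Characteristic :=
  characteristic_iff_map_le.mpr fun ϕ => by
    rw [map_powClosure]
    exact powClosure_mono m (characteristic_iff_map_le.mp hA ϕ)

theorem powClosure_mul_le (A : Subgroup G) (m k : ℕ) :
    A.powClosure (m * k) ≤ (A.powClosure m).powClosure k :=
  (closure_le _).mpr <| by
    rintro _ ⟨a, ha, rfl⟩
    simpa only [SetLike.mem_coe, pow_mul] using pow_mem_powClosure (pow_mem_powClosure ha m) k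

theorem exists_pow_eq_of_mem_powClosure_of_le_center {A : Subgroup G} (hA : A ≤ center G)
    {m : ℕ} {x : G} (hx : x ∈ A.powClosure m) : ∃ a ∈ A, a ^ m = x := by
  induction hx using closure_induction with
  | mem _ h => exact h
  | one => exact ⟨1, one_mem A, one_pow m⟩
  | mul _ _ _ _ hx hy =>
    obtain ⟨a, ha, rfl⟩ := hx
    obtain ⟨b, hb, rfl⟩ := hy
    have hab : Commute a b := (mem_center_iff.mp (hA ha) b).symm
    exact ⟨a * b, mul_mem ha hb, hab.mul_pow m⟩
  | inv _ _ hx =>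
    obtain ⟨a, ha, rfl⟩ := hx
    exact ⟨a⁻¹, inv_mem ha, inv_pow a m⟩

/-- P. Hall's lemma. -/
theorem powClosure_lowerCentralSeries_le (n j : ℕ) :
    ((⊤ : Subgroup G).powClosure n).lowerCentralSeries j ≤
      ((⊤ : Subgroup G).lowerCentralSeries j).powClosure (n ^ (j + 1)) ⊔
        (⊤ : Subgroup G).lowerCentralSeries (j + 1) := by
  induction j with
  | zero => exact le_sup_of_le_left (by simp)
  | succ j ih =>
    have hclosure : ((⊤ : Subgroup G).lowerCentralSeries j).powClosure (n ^ (j + 1)) ⊔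
        (⊤ : Subgroup G).lowerCentralSeries (j + 1) =
        closure ((· ^ n ^ (j + 1)) '' ((⊤ : Subgroup G).lowerCentralSeries j : Set G) ∪
          (⊤ : Subgroup G).lowerCentralSeries (j + 1)) := by
      rw [closure_union, closure_eq]; rfl
    rw [lowerCentralSeries_succ]
    refine (commutator_mono ih le_rfl).trans ?_
    rw [hclosure, powClosure]
    refine commutator_closure_le ?_
    rintro _ (⟨a, ha, rfl⟩ | hs) _ ⟨g, -, rfl⟩
    · have hmod := commutatorElement_pow_pow_mul_inv_mem ha g (n ^ (j + 1)) n
      rw [← pow_succ] at hmod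
      simpa using mul_mem (mem_sup_right hmod)
        (mem_sup_left (pow_mem_powClosure (commutator_mem_commutator ha (mem_top g)) (n ^ (j + 2))))
    · exact mem_sup_right (commutator_mem_commutator hs (mem_top _))

theorem lowerCentralSeries_quotient_lowerCentralSeries (c : ℕ) :
    (⊤ : Subgroup (G ⧸ (⊤ : Subgroup G).lowerCentralSeries c)).lowerCentralSeries c = ⊥ := by
  rw [← map_top_of_surjective _ (QuotientGroup.mk'_surjective _), ← map_lowerCentralSeries,
    QuotientGroup.map_mk'_self]

/-- Mal'cev's power theorem. -/
theorem exists_pow_eq_of_mem_powClosure {c : ℕ} (hc : (⊤ : Subgroup G).lowerCentralSeries c = ⊥)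
    (n : ℕ) {w : G} (hw : w ∈ (⊤ : Subgroup G).powClosure (n ^ c)) : ∃ x, x ^ n = w := by
  induction c generalizing G with
  | zero =>
    refine ⟨1, ?_⟩
    have hw : w ∈ (⊤ : Subgroup G).lowerCentralSeries 0 := mem_top w
    rw [hc, mem_bot] at hw
    rw [hw, one_pow]
  | succ c ih =>
    set K := (⊤ : Subgroup G).powClosure n
    set N := (⊤ : Subgroup K).lowerCentralSeries c
    obtain ⟨w, hwK, rfl⟩ : w ∈ ((⊤ : Subgroup K).powClosure (n ^ c)).map K.subtype := by
      rw [map_subtype_top_powClosure]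
      exact powClosure_mul_le _ n (n ^ c) (pow_succ' n c ▸ hw)
    have hwN : QuotientGroup.mk' N w ∈ (⊤ : Subgroup (K ⧸ N)).powClosure (n ^ c) := by
      rw [← map_top_of_surjective _ (QuotientGroup.mk'_surjective N), ← map_powClosure]
      exact mem_map_of_mem _ hwK
    obtain ⟨y, hy⟩ := ih (lowerCentralSeries_quotient_lowerCentralSeries c) hwN
    obtain ⟨y, rfl⟩ := QuotientGroup.mk'_surjective N y
    have hu : (y ^ n)⁻¹ * w ∈ N := by
      rw [← QuotientGroup.eq_one_iff, ← QuotientGroup.mk'_apply, map_mul, map_inv, map_pow, hy,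
        inv_mul_cancel]
    have hcenter : (⊤ : Subgroup G).lowerCentralSeries c ≤ center G :=
      commutator_top_right_eq_bot_iff_le_center.mp hc
    have hu' : (((y ^ n)⁻¹ * w : K) : G) ∈ ((⊤ : Subgroup G).lowerCentralSeries c).powClosure
        (n ^ (c + 1)) := by
      have := powClosure_lowerCentralSeries_le n c
        (top_subtype_lowerCentralSeries K c ▸ mem_map_of_mem K.subtype hu)
      rwa [hc, sup_bot_eq] at this
    obtain ⟨l, hl, hlu⟩ := exists_pow_eq_of_mem_powClosure_of_le_center hcenter hu'
    have hyl : Commute (y : G) (l ^ n ^ c) :=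
      (show Commute (y : G) l from mem_center_iff.mp (hcenter hl) y).pow_right _
    refine ⟨y * l ^ n ^ c, ?_⟩
    rw [hyl.mul_pow, ← pow_mul, ← pow_succ, hlu]
    simp

theorem isDivisible_iSup [Group.IsNilpotent G] {ι : Sort*} (D : ι → Subgroup G)
    (hD : ∀ i, (D i).IsDivisible) : (⨆ i, D i).IsDivisible := by
  set S := ⨆ i, D i
  obtain ⟨c, hc⟩ := nilpotent_iff_lowerCentralSeries.mp (isNilpotent S)
  intro d hd n hn
  have hS : S ≤ ((⊤ : Subgroup S).powClosure (n ^ c)).map S.subtype := by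
    rw [map_subtype_top_powClosure]
    refine iSup_le fun i x hx => ?_
    obtain ⟨e, he, rfl⟩ := hD i x hx (n ^ c) (pow_pos hn c)
    exact pow_mem_powClosure (le_iSup D i he) _
  obtain ⟨w, hw, rfl⟩ := hS hd
  obtain ⟨x, rfl⟩ := exists_pow_eq_of_mem_powClosure hc n hw
  exact ⟨x, x.2, rfl⟩

end Subgroup

theorem stmt12_general {G : Type*} [Group G] [Group.IsNilpotent G] :
    (∀ (ι : Type) (D : ι → Subgroup G), (∀ i, (D i).IsDivisible) →
      (⨆ i, D i).IsDivisible) ∧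
    ∃ H : Subgroup G, H.IsDivisible ∧ ∀ D : Subgroup G, D.IsDivisible → D ≤ H :=
  ⟨fun _ D hD => Subgroup.isDivisible_iSup D hD,
    ⨆ D : {D : Subgroup G // D.IsDivisible}, D.1, Subgroup.isDivisible_iSup _ fun D => D.2,
    fun D hD => le_iSup (fun D : {D : Subgroup G // D.IsDivisible} => D.1) ⟨D, hD⟩⟩

/-- In a nilpotent torsion-free group, the subgroup generated by any family of
divisible subgroups is divisible; consequently there is a largest divisible subgroup. -/
theorem stmt12 {G : Type*} [Group G] [Group.IsNilpotent G]
    (htf : ∀ g : G, g ≠ 1 → ¬IsOfFinOrder g) :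
    (∀ (ι : Type) (D : ι → Subgroup G), (∀ i, (D i).IsDivisible) →
      (⨆ i, D i).IsDivisible) ∧
    ∃ H : Subgroup G, H.IsDivisible ∧ ∀ D : Subgroup G, D.IsDivisible → D ≤ H :=
  stmt12_general
end

section
/- Let G be a nilpotent torsion-free group and H its largest divisible subgroup. Then the quotient G/H is torsion-free. -/
/-- Old Mathlib definition (removed since): no nontrivial element of `G` has finite order. -/
def Monoid.IsTorsionFree (G : Type*) [Monoid G] : Prop :=
  ∀ g : G, g ≠ 1 → ¬IsOfFinOrder g

/-!
Roots are unique in a torsion-free nilpotent group `G`, by induction on the nilpotency class: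
if `x ^ n = y ^ n`, then `x` and its conjugate `y * x * y⁻¹ = x * ⁅x⁻¹, y⁆` have the same `n`-th
power and both lie in `⟨x⟩ ⊔ [G, G]`, which is abelian modulo
`γ₃(G) = lowerCentralSeries ⊤ 2` and hence of smaller class.
So `x` commutes with `y`, and then `(x * y⁻¹) ^ n = 1` forces `x = y`.

Now if `g ^ n ∈ H`, divisibility of `H` gives `h ∈ H` with `h ^ n = g ^ n`, so `g = h ∈ H`.
-/

open Subgroup
open scoped commutatorElement

namespace Monoid.IsTorsionFree

theorem eq_one_of_pow_eq_one {M : Type*} [Monoid M] (h : Monoid.IsTorsionFree M) {x : M}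
    {n : ℕ} (hn : 0 < n) (hx : x ^ n = 1) : x = 1 :=
  by_contra fun hx1 ↦ h x hx1 (isOfFinOrder_iff_pow_eq_one.mpr ⟨n, hn, hx⟩)

theorem of_injective {M N : Type*} [Monoid M] [Monoid N] (h : Monoid.IsTorsionFree N)
    {f : M →* N} (hf : Function.Injective f) : Monoid.IsTorsionFree M :=
  fun x hx hfin ↦ h (f x) (by rwa [ne_eq, map_eq_one_iff f hf]) (hf.isOfFinOrder_iff.mpr hfin)

theorem eq_of_commute_of_pow_eq_pow {G : Type*} [Group G] (h : Monoid.IsTorsionFree G)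
    {x y : G} {n : ℕ} (hn : 0 < n) (hxy : Commute x y) (hpow : x ^ n = y ^ n) : x = y :=
  mul_inv_eq_one.mp <| h.eq_one_of_pow_eq_one hn <| by
    rw [hxy.inv_right.mul_pow, inv_pow, hpow, mul_inv_cancel]

end Monoid.IsTorsionFree

namespace Subgroup

variable {G : Type*} [Group G]

theorem nilpotencyClass_le_iff_lowerCentralSeries_eq_bot (S : Subgroup G) [Group.IsNilpotent S]
    {n : ℕ} : Group.nilpotencyClass S ≤ n ↔ S.lowerCentralSeries n = ⊥ := by
  rw [← lowerCentralSeries_eq_bot_iff_nilpotencyClass_le,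
    ← (map_injective S.subtype_injective).eq_iff, map_bot, top_subtype_lowerCentralSeries]

theorem lowerCentralSeries_succ_le_of_commutator_le {K : Subgroup G}
    (hK : ⁅K, K⁆ ≤ lowerCentralSeries ⊤ 2) (n : ℕ) :
    K.lowerCentralSeries (n + 1) ≤ lowerCentralSeries ⊤ (n + 2) := by
  induction n with
  | zero => exact hK
  | succ n ih => exact commutator_mono ih le_top

theorem commutator_closure_singleton_sup_commutator_le (x : G) :
    ⁅closure {x} ⊔ _root_.commutator G, closure {x} ⊔ _root_.commutator G⁆ ≤
      lowerCentralSeries ⊤ 2 := by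
  let π := QuotientGroup.mk' (lowerCentralSeries (⊤ : Subgroup G) 2)
  have central : ∀ u ∈ _root_.commutator G, ∀ g, Commute (π u) (π g) := fun u hu g ↦ by
    rw [← commutatorElement_eq_one_iff_commute, ← map_commutatorElement, QuotientGroup.mk'_apply,
      QuotientGroup.eq_one_iff]
    exact commutator_mem_commutator hu (mem_top g)
  have decomp : ∀ a ∈ closure {x} ⊔ _root_.commutator G,
      ∃ k : ℤ, ∃ u ∈ _root_.commutator G, x ^ k * u = a := by
    intro a ha
    obtain ⟨b, hb, u, hu, rfl⟩ := mem_sup_of_normal_right.mp ha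
    obtain ⟨k, rfl⟩ := mem_closure_singleton.mp hb
    exact ⟨k, u, hu, rfl⟩
  refine commutator_le.mpr fun a ha b hb ↦ ?_
  obtain ⟨k, u, hu, rfl⟩ := decomp a ha
  obtain ⟨l, v, hv, rfl⟩ := decomp b hb
  rw [← QuotientGroup.eq_one_iff, ← QuotientGroup.mk'_apply, map_commutatorElement,
    commutatorElement_eq_one_iff_commute, map_mul, map_mul]
  exact ((((Commute.refl x).zpow_zpow k l).map π).mul_right (central v hv _).symm).mul_left
    ((central u hu _).mul_right (central u hu v))

theorem nilpotencyClass_closure_singleton_sup_commutator_lt [Group.IsNilpotent G] (x : G)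
    (hG : 2 ≤ Group.nilpotencyClass G) :
    Group.nilpotencyClass (closure {x} ⊔ _root_.commutator G : Subgroup G) <
      Group.nilpotencyClass G := by
  obtain ⟨c, hc⟩ := Nat.exists_eq_add_of_le' hG
  rw [hc, Nat.lt_succ_iff, nilpotencyClass_le_iff_lowerCentralSeries_eq_bot, eq_bot_iff,
    ← (lowerCentralSeries_eq_bot_iff_nilpotencyClass_le (G := G)).mpr hc.le]
  exact lowerCentralSeries_succ_le_of_commutator_le
    (commutator_closure_singleton_sup_commutator_le x) c

end Subgroup

theorem Monoid.IsTorsionFree.eq_of_pow_eq_pow {G : Type*} [Group G] [Group.IsNilpotent G]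
    (htf : Monoid.IsTorsionFree G) {x y : G} {n : ℕ} (hn : 0 < n) (hpow : x ^ n = y ^ n) :
    x = y := by
  induction hc : Group.nilpotencyClass G using Nat.strong_induction_on generalizing G with
  | _ c ih =>
    refine htf.eq_of_commute_of_pow_eq_pow hn ?_ hpow
    rcases le_or_gt (Group.nilpotencyClass G) 1 with hle | hgt
    · exact isMulCommutative_iff.mp (Group.IsNilpotent.nilpotencyClass_le_one_iff.mp hle) x y
    · let K := closure {x} ⊔ commutator G
      have hxK : x ∈ K := mem_sup_left (mem_closure_singleton_self x)
      have hconjK : y * x * y⁻¹ ∈ K := by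
        rw [show y * x * y⁻¹ = x * ⁅x⁻¹, y⁆ by group]
        exact mul_mem hxK (mem_sup_right (commutator_mem_commutator (mem_top _) (mem_top _)))
      have hconj_pow : (y * x * y⁻¹) ^ n = x ^ n := by
        rw [conj_pow, hpow, (Commute.self_pow y n).eq, mul_inv_cancel_right]
      have hconj : y * x * y⁻¹ = x := congrArg Subtype.val <|
        ih _ (hc ▸ nilpotencyClass_closure_singleton_sup_commutator_lt x hgt)
          (htf.of_injective K.subtype_injective) (x := ⟨_, hconjK⟩) (y := ⟨x, hxK⟩)
          (Subtype.ext (by simpa using hconj_pow)) rfl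
      exact (mul_inv_eq_iff_eq_mul.mp hconj).symm

theorem Subgroup.IsDivisible.mem_of_pow_mem {G : Type*} [Group G] [Group.IsNilpotent G]
    (htf : Monoid.IsTorsionFree G) {D : Subgroup G} (hD : D.IsDivisible) {x : G} {n : ℕ}
    (hn : 0 < n) (hx : x ^ n ∈ D) : x ∈ D := by
  obtain ⟨d, hdD, hd⟩ := hD _ hx n hn
  exact htf.eq_of_pow_eq_pow hn hd ▸ hdD

theorem QuotientGroup.isTorsionFree_of_pow_mem {G : Type*} [Group G] (N : Subgroup G) [N.Normal]
    (hN : ∀ x : G, ∀ n : ℕ, 0 < n → x ^ n ∈ N → x ∈ N) : Monoid.IsTorsionFree (G ⧸ N) := by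
  rintro ⟨x⟩ hx hfin
  obtain ⟨n, hn, hpow⟩ := isOfFinOrder_iff_pow_eq_one.mp hfin
  refine hx ((QuotientGroup.eq_one_iff x).mpr (hN x n hn ?_))
  rwa [← QuotientGroup.eq_one_iff, QuotientGroup.mk_pow]

theorem stmt13_general {G : Type*} [Group G] [Group.IsNilpotent G]
    (htf : Monoid.IsTorsionFree G)
    (H : Subgroup G) [H.Normal] (hHdiv : H.IsDivisible) :
    Monoid.IsTorsionFree (G ⧸ H) :=
  QuotientGroup.isTorsionFree_of_pow_mem H fun _ _ hn ↦ hHdiv.mem_of_pow_mem htf hn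

/-- If `H` is the largest divisible subgroup of a nilpotent torsion-free group `G`,
then `G/H` is torsion-free. -/
theorem stmt13 {G : Type*} [Group G] [Group.IsNilpotent G]
    (htf : Monoid.IsTorsionFree G)
    (H : Subgroup G) [H.Normal] (hHdiv : H.IsDivisible)
    (hHmax : ∀ D : Subgroup G, D.IsDivisible → D ≤ H) :
    Monoid.IsTorsionFree (G ⧸ H) :=
  stmt13_general htf H hHdiv
end

section
/- Let G be a reduced torsion-free nilpotent group of class s. Then G/Z_{s-1}(G) is a reduced torsion-free abelian group. -/
/-! Write `Z i` for the upper central series. For each `g`, the map `x ↦ ⁅x, g⁆` sends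
`Z (i + 2)` into `Z (i + 1)`, depends on `x` only modulo `Z (i + 1)`, and satisfies
`⁅x ^ n, g⁆ ≡ ⁅x, g⁆ ^ n` modulo `Z i`. So an element of `Z (i + 1)` whose `n`-th power
lies in `Z i` has commutators whose `n`-th powers lie in `Z (i - 1)`, and going down one
reaches torsion in `G`; likewise a subgroup `D ≤ Z (i + 1)` divisible modulo `Z i` gives
`⁅D, ⊤⁆ ≤ Z i` divisible modulo `Z (i - 1)`, and going down one reaches a divisible subgroup
of `G`. Descending from `Z c = ⊤` shows that every `G / Z i` is torsion-free and reduced,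
and `G / Z (s - 1)` is abelian because `Z s = ⊤`. -/

open QuotientGroup
open scoped commutatorElement

section Commutator

variable {H : Type*} [Group H]
open Subgroup

theorem commutatorElement_pow_left_of_mem_center {a b : H} (h : ⁅a, b⁆ ∈ center H) (n : ℕ) :
    ⁅a ^ n, b⁆ = ⁅a, b⁆ ^ n := by
  induction n with
  | zero => simp
  | succ n ih =>
    rw [pow_succ', commutatorElement_mul_left_eq_conj_mul, ih,
      mem_center_iff.mp (pow_mem h n) a, pow_succ]
    group

theorem commutatorElement_mul_left_of_mem_center {z : H} (hz : z ∈ center H) (a b : H) :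
    ⁅a * z, b⁆ = ⁅a, b⁆ := by
  rw [commutatorElement_def, commutatorElement_def, mul_assoc a z b, ← mem_center_iff.mp hz b]
  group

end Commutator

theorem QuotientGroup.mk_commutatorElement {G : Type*} [Group G] (N : Subgroup G) [N.Normal]
    (x y : G) : ((⁅x, y⁆ : G) : G ⧸ N) = ⁅(x : G ⧸ N), (y : G ⧸ N)⁆ :=
  map_commutatorElement (mk' N) x y

namespace Subgroup

variable {G : Type*} [Group G]

theorem mk_mem_center_iff_mem_upperCentralSeries_succ {i : ℕ} {x : G} :
    (x : G ⧸ upperCentralSeries G i) ∈ center (G ⧸ upperCentralSeries G i) ↔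
      x ∈ upperCentralSeries G (i + 1) := by
  change _ ↔ x ∈ upperCentralSeriesStep (upperCentralSeries G i)
  rw [upperCentralSeriesStep_eq_comap_center]
  rfl

theorem mk_commutatorElement_pow_left {i : ℕ} {x : G} (hx : x ∈ upperCentralSeries G (i + 2))
    (g : G) (n : ℕ) :
    ((⁅x ^ n, g⁆ : G) : G ⧸ upperCentralSeries G i) = ((⁅x, g⁆ ^ n : G) : G ⧸ _) := by
  have hc := mk_mem_center_iff_mem_upperCentralSeries_succ.mpr
    (mem_upperCentralSeries_succ_iff.mp hx g)
  rw [mk_commutatorElement] at hc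
  rw [mk_commutatorElement, QuotientGroup.mk_pow, QuotientGroup.mk_pow, mk_commutatorElement,
    commutatorElement_pow_left_of_mem_center hc]

theorem mk_commutatorElement_congr_left {i : ℕ} {x y : G}
    (h : (x : G ⧸ upperCentralSeries G (i + 1)) = y) (g : G) :
    ((⁅x, g⁆ : G) : G ⧸ upperCentralSeries G i) = ((⁅y, g⁆ : G) : G ⧸ _) := by
  have hz := mk_mem_center_iff_mem_upperCentralSeries_succ.mpr (QuotientGroup.eq.mp h)
  rw [mk_commutatorElement, mk_commutatorElement, ← mul_inv_cancel_left x y,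
    QuotientGroup.mk_mul, commutatorElement_mul_left_of_mem_center hz]

theorem commutator_top_le_upperCentralSeries_iff {D : Subgroup G} {i : ℕ} :
    ⁅D, ⊤⁆ ≤ upperCentralSeries G i ↔ D ≤ upperCentralSeries G (i + 1) := by
  simp only [commutator_le, mem_top, forall_const]
  rfl

theorem le_upperCentralSeries_of_forall_le_succ [Group.IsNilpotent G] {H : Subgroup G}
    {i : ℕ} (hstep : ∀ j, i ≤ j → H ≤ upperCentralSeries G (j + 1) → H ≤ upperCentralSeries G j) :
    H ≤ upperCentralSeries G i := by
  have htop : upperCentralSeries G (i + Group.nilpotencyClass G) = ⊤ :=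
    upperCentralSeries_eq_top_iff_nilpotencyClass_le.mpr (Nat.le_add_left _ i)
  suffices ∀ k, H ≤ upperCentralSeries G (i + k) → H ≤ upperCentralSeries G i from
    this _ (htop ▸ le_top)
  intro k
  induction k with
  | zero => exact id
  | succ k ih => exact fun hk => ih (hstep (i + k) (Nat.le_add_right i k) hk)

theorem mem_upperCentralSeries_of_pow_mem_of_mem_succ (htf : Monoid.IsTorsionFree G) {n : ℕ}
    (hn : 0 < n) {i : ℕ} {x : G} (hx : x ∈ upperCentralSeries G (i + 1))
    (hxn : x ^ n ∈ upperCentralSeries G i) : x ∈ upperCentralSeries G i := by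
  induction i generalizing x with
  | zero =>
    by_contra hx1
    exact htf x (by simpa using hx1) (isOfFinOrder_iff_pow_eq_one.mpr ⟨n, hn, mem_bot.mp hxn⟩)
  | succ i ih =>
    refine mem_upperCentralSeries_succ_iff.mpr fun g =>
      ih (mem_upperCentralSeries_succ_iff.mp hx g) ?_
    rw [← QuotientGroup.eq_one_iff, ← mk_commutatorElement_pow_left hx,
      QuotientGroup.eq_one_iff]
    exact mem_upperCentralSeries_succ_iff.mp hxn g

theorem mem_upperCentralSeries_of_pow_mem [Group.IsNilpotent G] (htf : Monoid.IsTorsionFree G)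
    {n : ℕ} (hn : 0 < n) {i : ℕ} {x : G} (hxn : x ^ n ∈ upperCentralSeries G i) :
    x ∈ upperCentralSeries G i :=
  zpowers_le.mp <| le_upperCentralSeries_of_forall_le_succ fun _ hij hj =>
    zpowers_le.mpr <| mem_upperCentralSeries_of_pow_mem_of_mem_succ htf hn (zpowers_le.mp hj)
      (upperCentralSeries_mono G hij hxn)

theorem isTorsionFree_quotient_upperCentralSeries [Group.IsNilpotent G]
    (htf : Monoid.IsTorsionFree G) (i : ℕ) :
    Monoid.IsTorsionFree (G ⧸ upperCentralSeries G i) := by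
  rintro q hq hfin
  obtain ⟨x, rfl⟩ := mk_surjective q
  obtain ⟨n, hn, hxn⟩ := isOfFinOrder_iff_pow_eq_one.mp hfin
  rw [← QuotientGroup.mk_pow, QuotientGroup.eq_one_iff] at hxn
  exact hq ((QuotientGroup.eq_one_iff x).mpr (mem_upperCentralSeries_of_pow_mem htf hn hxn))

theorem isDivisible_closure_of_subset_center {S : Set G} (hS : S ⊆ center G)
    (hroots : ∀ s ∈ S, ∀ n : ℕ, 0 < n → ∃ x ∈ closure S, x ^ n = s) :
    (closure S).IsDivisible := by
  intro d hd n hn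
  induction hd using closure_induction with
  | mem s hs => exact hroots s hs n hn
  | one => exact ⟨1, one_mem _, one_pow n⟩
  | mul a b _ _ iha ihb =>
    obtain ⟨x, hx, rfl⟩ := iha
    obtain ⟨y, hy, rfl⟩ := ihb
    have hxy : Commute x y := (mem_center_iff.mp ((closure_le _).mpr hS hx) y).symm
    exact ⟨x * y, mul_mem hx hy, hxy.mul_pow n⟩
  | inv a _ iha =>
    obtain ⟨x, hx, rfl⟩ := iha
    exact ⟨x⁻¹, inv_mem hx, inv_pow x n⟩

def IsDivisibleModulo (D N : Subgroup G) : Prop :=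
  ∀ d ∈ D, ∀ n : ℕ, 0 < n → ∃ x ∈ D, (x ^ n)⁻¹ * d ∈ N

theorem IsDivisibleModulo.mono {D M N : Subgroup G} (hD : D.IsDivisibleModulo M)
    (hMN : M ≤ N) : D.IsDivisibleModulo N := fun d hd n hn =>
  (hD d hd n hn).imp fun _ ⟨hx, hxd⟩ => ⟨hx, hMN hxd⟩

theorem IsDivisibleModulo.isDivisible_of_bot {D : Subgroup G}
    (hD : D.IsDivisibleModulo ⊥) : D.IsDivisible := fun d hd n hn =>
  (hD d hd n hn).imp fun _ ⟨hx, hxd⟩ => ⟨hx, inv_mul_eq_one.mp (mem_bot.mp hxd)⟩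

theorem isDivisibleModulo_iff_isDivisible_map {D N : Subgroup G} [N.Normal] :
    D.IsDivisibleModulo N ↔ (D.map (mk' N)).IsDivisible := by
  simp only [IsDivisibleModulo, IsDivisible, mem_map, forall_exists_index, and_imp,
    forall_apply_eq_imp_iff₂, exists_exists_and_eq_and, coe_mk', ← QuotientGroup.mk_pow,
    QuotientGroup.eq]

theorem IsDivisibleModulo.commutator_top {D : Subgroup G} {i : ℕ}
    (hD : D ≤ upperCentralSeries G (i + 2))
    (hdiv : D.IsDivisibleModulo (upperCentralSeries G (i + 1))) :
    IsDivisibleModulo ⁅D, ⊤⁆ (upperCentralSeries G i) := by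
  rw [isDivisibleModulo_iff_isDivisible_map, commutator_def, MonoidHom.map_closure]
  apply isDivisible_closure_of_subset_center
  · rintro _ ⟨_, ⟨d, hd, g, -, rfl⟩, rfl⟩
    exact mk_mem_center_iff_mem_upperCentralSeries_succ.mpr
      (mem_upperCentralSeries_succ_iff.mp (hD hd) g)
  · rintro _ ⟨_, ⟨d, hd, g, -, rfl⟩, rfl⟩ n hn
    obtain ⟨x, hx, hxd⟩ := hdiv d hd n hn
    refine ⟨mk' _ ⁅x, g⁆, subset_closure ⟨_, ⟨x, hx, g, mem_top g, rfl⟩, rfl⟩, ?_⟩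
    rw [← map_pow, coe_mk', ← mk_commutatorElement_pow_left (hD hx)]
    exact mk_commutatorElement_congr_left (QuotientGroup.eq.mpr hxd) g

theorem le_upperCentralSeries_of_isDivisibleModulo_of_le_succ
    (hred : ∀ D : Subgroup G, D.IsDivisible → D = ⊥) {i : ℕ} {D : Subgroup G}
    (hD : D ≤ upperCentralSeries G (i + 1))
    (hdiv : D.IsDivisibleModulo (upperCentralSeries G i)) :
    D ≤ upperCentralSeries G i := by
  induction i generalizing D with
  | zero => exact (hred D hdiv.isDivisible_of_bot).le
  | succ i ih =>
    exact commutator_top_le_upperCentralSeries_iff.mp <|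
      ih (commutator_top_le_upperCentralSeries_iff.mpr hD) (hdiv.commutator_top hD)

theorem le_upperCentralSeries_of_isDivisibleModulo [Group.IsNilpotent G]
    (hred : ∀ D : Subgroup G, D.IsDivisible → D = ⊥) {i : ℕ} {D : Subgroup G}
    (hdiv : D.IsDivisibleModulo (upperCentralSeries G i)) : D ≤ upperCentralSeries G i :=
  le_upperCentralSeries_of_forall_le_succ fun _ hij hj =>
    le_upperCentralSeries_of_isDivisibleModulo_of_le_succ hred hj
      (hdiv.mono (upperCentralSeries_mono G hij))

theorem IsDivisible.eq_bot_of_quotient_upperCentralSeries [Group.IsNilpotent G]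
    (hred : ∀ D : Subgroup G, D.IsDivisible → D = ⊥) {i : ℕ}
    {D : Subgroup (G ⧸ upperCentralSeries G i)} (hdiv : D.IsDivisible) : D = ⊥ := by
  rw [← map_comap_eq_self_of_surjective (mk'_surjective _) D] at hdiv ⊢
  rw [← isDivisibleModulo_iff_isDivisible_map] at hdiv
  rw [eq_bot_iff, map_le_iff_le_comap, MonoidHom.comap_bot, ker_mk']
  exact le_upperCentralSeries_of_isDivisibleModulo hred hdiv

end Subgroup

/-- If `G` is a reduced torsion-free nilpotent group of class `s`, then
`G/Z_{s-1}(G)` is a reduced torsion-free abelian group. -/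
theorem stmt16 {G : Type*} [Group G] [Group.IsNilpotent G]
    (htf : Monoid.IsTorsionFree G)
    (hred : ∀ D : Subgroup G, D.IsDivisible → D = ⊥)
    (s : ℕ) (hs : Group.nilpotencyClass G = s) :
    (∀ a b : G ⧸ Subgroup.upperCentralSeries G (s - 1), a * b = b * a) ∧
    Monoid.IsTorsionFree (G ⧸ Subgroup.upperCentralSeries G (s - 1)) ∧
    (∀ D : Subgroup (G ⧸ Subgroup.upperCentralSeries G (s - 1)), D.IsDivisible → D = ⊥) := by
  have htop : Subgroup.upperCentralSeries G (s - 1 + 1) = ⊤ :=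
    Subgroup.upperCentralSeries_eq_top_iff_nilpotencyClass_le.mpr (by omega)
  refine ⟨fun a b => ?_, Subgroup.isTorsionFree_quotient_upperCentralSeries htf _,
    fun D hD => hD.eq_bot_of_quotient_upperCentralSeries hred⟩
  induction a using QuotientGroup.induction_on with
  | H a =>
    have ha : (a : G ⧸ Subgroup.upperCentralSeries G (s - 1)) ∈ Subgroup.center _ :=
      Subgroup.mk_mem_center_iff_mem_upperCentralSeries_succ.mpr (htop ▸ Subgroup.mem_top a)
    exact (Subgroup.mem_center_iff.mp ha b).symm
end
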